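/- arXiv:1904.10113 — 3 statements merged into one kernel-verified Lean document; each statement's English description precedes it below -/
import Mathlib

section
/- Consider the forced-move cops-and-robbers game on a k-regularly oriented toroidal grid C_n □ C_n with 2 ≤ k < n. Let K₁ and K₂ be maximal confluxes with τ(K₁) = −τ(K₂) and 𝔡(K₁,K₂) = 2, all of whose main corners are occupied by cops (four cops), with one additional cop forcing the robber to move (five cops in total). If the robber occupies a vertex of B(K₁,K₂), then the cops can guarantee that after finitely many turns the robber occupies a conflux outside B(K₁,K₂). -/
namespace CopsPaper

/-! ## Generic cops-and-robbers machinery.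

A cop strategy is a function from the list of robber positions seen so far to
the new cop positions.  Quantifying over all (legal) robber position sequences
is equivalent to quantifying over all robber strategies. -/

/-- A lazy step in a digraph: stay put or move along an arc. -/
def Step {α : Type*} (A : α → α → Prop) (u v : α) : Prop := u = v ∨ A u v

/-- The cop positions induced by a cop strategy `σ` against the robber
trajectory `rob`, in the game where the cops move first:
`cops 0 = σ []` are the initial positions, and the cops' `(t+1)`-st positions
are chosen after seeing `rob 0, …, rob t`. -/
def playCops {α ι : Type*} (σ : List α → ι → α) (rob : ℕ → α) (t : ℕ) : ι → α :=
  σ ((List.range t).map rob)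

/-- `k` cops have a winning strategy in the cops-and-robbers game on the
digraph with arc relation `A` (both cops and robber may stay put or move
along an arc on their turn; the cops choose their positions first, the robber
then chooses any starting vertex, and the cops win if at some moment a cop
occupies the robber's vertex). -/
def CopsWin {α : Type*} (A : α → α → Prop) (k : ℕ) : Prop :=
  ∃ σ : List α → Fin k → α,
    ∀ rob : ℕ → α, (∀ t, Step A (rob t) (rob (t + 1))) →
      (∀ t i, Step A (playCops σ rob t i) (playCops σ rob (t + 1) i)) ∧
      ∃ t, ∃ i, playCops σ rob t i = rob t ∨ playCops σ rob (t + 1) i = rob t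

/-- The cop number of a digraph. -/
noncomputable def copNumber {α : Type*} (A : α → α → Prop) : ℕ :=
  sInf {k | CopsWin A k}

/-- Cop positions in a game played from a given position: the cops start at
`c₀`, the robber moves first, and the cops' `(t+1)`-st positions are chosen
after seeing `rob 0, …, rob (t+1)`. -/
def copsFrom {α ι : Type*} (σ : List α → ι → α) (c₀ : ι → α) (rob : ℕ → α) :
    ℕ → ι → α
  | 0 => c₀
  | t + 1 => σ ((List.range (t + 2)).map rob)

/-- The robber is captured in the position game (robber moves first):
either a cop moves onto the robber's current vertex, or the robber moves
onto a cop. -/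
def Captured {α ι : Type*} (cops : ℕ → ι → α) (rob : ℕ → α) : Prop :=
  ∃ t, ∃ i, cops t i = rob t ∨ cops t i = rob (t + 1)

/-- From the position with cops at `c₀`, robber at `r₀` and the robber to
move (cops stepping lazily along `A`, robber stepping along `R`), the cops can
guarantee `Goal` (a predicate of the resulting cop and robber trajectories). -/
def EnsureFrom {α ι : Type*} (A R : α → α → Prop) (c₀ : ι → α) (r₀ : α)
    (Goal : (ℕ → ι → α) → (ℕ → α) → Prop) : Prop :=
  ∃ σ : List α → ι → α,
    ∀ rob : ℕ → α, rob 0 = r₀ → (∀ t, R (rob t) (rob (t + 1))) →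
      (∀ t i, Step A (copsFrom σ c₀ rob t i) (copsFrom σ c₀ rob (t + 1) i)) ∧
      Goal (copsFrom σ c₀ rob) rob

/-- The robber is captured in the game where the cops move first. -/
def CapturedG {α ι : Type*} (cops : ℕ → ι → α) (rob : ℕ → α) : Prop :=
  ∃ t, ∃ i, cops t i = rob t ∨ cops (t + 1) i = rob t

/-- In the game on the digraph `A` (cops choose their starting vertices first,
robber steps along `R`), `k` cops can guarantee `Goal`. -/
def EnsureGame {α : Type*} (A R : α → α → Prop) (k : ℕ)
    (Goal : (ℕ → Fin k → α) → (ℕ → α) → Prop) : Prop :=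
  ∃ σ : List α → Fin k → α,
    ∀ rob : ℕ → α, (∀ t, R (rob t) (rob (t + 1))) →
      (∀ t i, Step A (playCops σ rob t i) (playCops σ rob (t + 1) i)) ∧
      Goal (playCops σ rob) rob

/-- `u` can reach `v` in at most `m` (lazy) moves along the digraph `A`. -/
def ReachIn {α : Type*} (A : α → α → Prop) (m : ℕ) (u v : α) : Prop :=
  ∃ f : ℕ → α, f 0 = u ∧ f m = v ∧ ∀ t, t < m → Step A (f t) (f (t + 1))

/-! ## The toroidal grid `Cₙ □ Cₙ` with a straight-ahead orientation. -/

/-- Vertices of the toroidal grid. -/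
abbrev Vtx (n : ℕ) := ZMod n × ZMod n

/-- `a` is `1` or `-1`. -/
def PM (a : ℤ) : Prop := a = 1 ∨ a = -1

/-- The straight-ahead orientation of `Cₙ □ Cₙ` determined by `δ, ε`:
the out-neighbours of `(x, y)` are `(x + δ y, y)` and `(x, y + ε x)`. -/
def Adj {n : ℕ} (δ ε : ZMod n → ℤ) (p q : Vtx n) : Prop :=
  (q.1 = p.1 + (δ p.2 : ZMod n) ∧ q.2 = p.2) ∨
  (q.1 = p.1 ∧ q.2 = p.2 + (ε p.1 : ZMod n))

/-- The out-neighbour of `p` along its column (the first coordinate moves). -/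
def vOut {n : ℕ} (δ : ZMod n → ℤ) (p : Vtx n) : Vtx n :=
  (p.1 + (δ p.2 : ZMod n), p.2)

/-- The out-neighbour of `p` along its row (the second coordinate moves). -/
def hOut {n : ℕ} (ε : ZMod n → ℤ) (p : Vtx n) : Vtx n :=
  (p.1, p.2 + (ε p.1 : ZMod n))

/-- The type `τ(p) = (δ y, ε x)` of a vertex `p = (x, y)`. -/
def ty {n : ℕ} (δ ε : ZMod n → ℤ) (p : Vtx n) : ℤ × ℤ := (δ p.2, ε p.1)

/-- The direction `u - w` of the main diagonal of a vertex. -/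
def mdDir {n : ℕ} (δ ε : ZMod n → ℤ) (p : Vtx n) : ℤ × ℤ := (δ p.2, -(ε p.1))

/-- The secondary diagonal `SD(p) = {p + r·τ(p) : r ∈ ℤ}`. -/
def SD {n : ℕ} (δ ε : ZMod n → ℤ) (p : Vtx n) : Set (Vtx n) :=
  {q | ∃ r : ℤ, q.1 = p.1 + ((r * δ p.2 : ℤ) : ZMod n) ∧
                q.2 = p.2 + ((r * ε p.1 : ℤ) : ZMod n)}

/-- The main diagonal `MD(p) = {p + r·(u - w) : r ∈ ℤ}` where `u, w` are the
out-neighbours of `p`. -/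
def MD {n : ℕ} (δ ε : ZMod n → ℤ) (p : Vtx n) : Set (Vtx n) :=
  {q | ∃ r : ℤ, q.1 = p.1 + ((r * δ p.2 : ℤ) : ZMod n) ∧
                q.2 = p.2 - ((r * ε p.1 : ℤ) : ZMod n)}

/-- An element of `{1, -1}² ⊆ ℤ²`. -/
def IsType (d : ℤ × ℤ) : Prop := (d.1 = 1 ∨ d.1 = -1) ∧ (d.2 = 1 ∨ d.2 = -1)

/-- Orthogonality in `ℤ²`. -/
def Orth (a b : ℤ × ℤ) : Prop := a.1 * b.1 + a.2 * b.2 = 0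

/-! ### Streams -/

/-- A stream: a set of consecutive columns (`vert = true`, lines indexed by
the second coordinate, with constant `δ`) or consecutive rows (`vert = false`,
lines indexed by the first coordinate, with constant `ε`), all oriented in the
same direction, starting at index `a` and of width `w`. -/
structure Strm (n : ℕ) (δ ε : ZMod n → ℤ) where
  vert : Bool
  a : ZMod n
  w : ℕ
  one_le : 1 ≤ w
  le_n : w ≤ n
  const : ∀ i : ℕ, i < w →
    (if vert then δ else ε) (a + (i : ZMod n)) = (if vert then δ else ε) a

namespace Strm

variable {n : ℕ} {δ ε : ZMod n → ℤ}

/-- The coordinate of a vertex indexing the lines of the stream's kind. -/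
def proj (S : Strm n δ ε) (p : Vtx n) : ZMod n := if S.vert then p.2 else p.1

/-- The vertex set `V(S)` of a stream. -/
def verts (S : Strm n δ ε) : Set (Vtx n) :=
  {p | ∃ i : ℕ, i < S.w ∧ S.proj p = S.a + (i : ZMod n)}

/-- The common direction of the lines of a stream. -/
def dir (S : Strm n δ ε) : ℤ := (if S.vert then δ else ε) S.a

/-- The stream is maximal: it cannot be extended by a line on either side. -/
def IsMax (S : Strm n δ ε) : Prop :=
  S.w = n ∨ ((if S.vert then δ else ε) (S.a - 1) ≠ (if S.vert then δ else ε) S.a ∧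
             (if S.vert then δ else ε) (S.a + (S.w : ZMod n)) ≠ (if S.vert then δ else ε) S.a)

/-- The vertex of the line of the stream's kind with index `b` closest to `p`. -/
def cl (S : Strm n δ ε) (b : ZMod n) (p : Vtx n) : Vtx n :=
  if S.vert then (p.1, b) else (b, p.2)

end Strm

/-- The largest width of a stream in the grid. -/
noncomputable def maxW (n : ℕ) (δ ε : ZMod n → ℤ) : ℕ :=
  sSup {w | ∃ S : Strm n δ ε, S.w = w}

/-- The vertices of the substream `S'` of `S` formed by the lines of `S` at
distance at least `m - 1` from its boundary lines, where `m = ⌊w(S)/3⌋ + 1`. -/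
def innerVerts {n : ℕ} {δ ε : ZMod n → ℤ} (S : Strm n δ ε) : Set (Vtx n) :=
  {p | ∃ i : ℕ, S.w / 3 ≤ i ∧ i + S.w / 3 ≤ S.w - 1 ∧ S.proj p = S.a + (i : ZMod n)}

/-- The cyclic distance between two elements of `ZMod n`. -/
def cdist {n : ℕ} (a b : ZMod n) : ℕ := min (b - a).val (a - b).val

/-! ### Confluxes, corners and guard posts -/

/-- Adjacency in the underlying (undirected) grid. -/
def UAdj {n : ℕ} (δ ε : ZMod n → ℤ) (p q : Vtx n) : Prop := Adj δ ε p q ∨ Adj δ ε q p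

/-- Number of neighbours of `v` inside `K`. -/
noncomputable def nbrCount {n : ℕ} (δ ε : ZMod n → ℤ) (K : Set (Vtx n)) (v : Vtx n) : ℕ :=
  {u ∈ K | UAdj δ ε v u}.ncard

/-- Number of out-neighbours of `v` inside `K`. -/
noncomputable def outCount {n : ℕ} (δ ε : ZMod n → ℤ) (K : Set (Vtx n)) (v : Vtx n) : ℕ :=
  {u ∈ K | Adj δ ε v u}.ncard

/-- A corner of `K`: a vertex of `K` with the minimum number of neighbours in `K`. -/
def Corner {n : ℕ} (δ ε : ZMod n → ℤ) (K : Set (Vtx n)) (v : Vtx n) : Prop :=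
  v ∈ K ∧ ∀ u ∈ K, nbrCount δ ε K v ≤ nbrCount δ ε K u

/-- A main corner of `K`: when `K` has four corners, a corner with an odd
number of out-neighbours in `K`; when `K` has at most two corners, every
corner is main. -/
def MainCorner {n : ℕ} (δ ε : ZMod n → ℤ) (K : Set (Vtx n)) (v : Vtx n) : Prop :=
  Corner δ ε K v ∧ ({u | Corner δ ε K u}.ncard ≤ 2 ∨ Odd (outCount δ ε K v))

/-- A secondary corner of `K` without out-neighbours in `K`. -/
def SecNoOut {n : ℕ} (δ ε : ZMod n → ℤ) (K : Set (Vtx n)) (v : Vtx n) : Prop :=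
  Corner δ ε K v ∧ ¬ MainCorner δ ε K v ∧ ∀ u ∈ K, ¬ Adj δ ε v u

/-- The terminal corner of `K`: a corner with no out-neighbours in `K`. -/
def TermCorner {n : ℕ} (δ ε : ZMod n → ℤ) (K : Set (Vtx n)) (v : Vtx n) : Prop :=
  Corner δ ε K v ∧ ∀ u ∈ K, ¬ Adj δ ε v u

/-- The vertical guard post of `K`: the vertical out-neighbour of the main
corner of `K` whose vertical edge leaves `K` (but no other edge leaves `K`,
unless `K` has only one vertex). -/
def IsVGuard {n : ℕ} (δ ε : ZMod n → ℤ) (K : Set (Vtx n)) (g : Vtx n) : Prop :=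
  ∃ v, MainCorner δ ε K v ∧ vOut δ v ∉ K ∧ (K = {v} ∨ hOut ε v ∈ K) ∧ g = vOut δ v

/-- The horizontal guard post of `K`. -/
def IsHGuard {n : ℕ} (δ ε : ZMod n → ℤ) (K : Set (Vtx n)) (g : Vtx n) : Prop :=
  ∃ v, MainCorner δ ε K v ∧ hOut ε v ∉ K ∧ (K = {v} ∨ vOut δ v ∈ K) ∧ g = hOut ε v

/-- The terminal guard post of a (maximal) conflux `K`: the vertex outside `K`
with the same out-neighbours as the terminal corner of `K`. -/
def IsTermGuard {n : ℕ} (δ ε : ZMod n → ℤ) (K : Set (Vtx n)) (g : Vtx n) : Prop :=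
  g ∉ K ∧ ∃ c, TermCorner δ ε K c ∧
    ({vOut δ g, hOut ε g} : Set (Vtx n)) = {vOut δ c, hOut ε c}

/-- The number of steps needed to reach the boundary of `K` from `p`, moving
repeatedly by `st` (the boundary is reached when the next step exits `K`). -/
noncomputable def exitDist {n : ℕ} (K : Set (Vtx n)) (p : Vtx n) (st : ℤ × ℤ) : ℕ :=
  sInf {m : ℕ |
    (p.1 + ((((m + 1 : ℕ) : ℤ) * st.1 : ℤ) : ZMod n),
     p.2 + ((((m + 1 : ℕ) : ℤ) * st.2 : ℤ) : ZMod n)) ∉ K}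

/-! ### Maximal confluxes, escape distances and shadows -/

/-- `y` and `y'` index lines of the same maximal stream (for the direction
function `f`): `f` is constant on a cyclic interval containing both. -/
def SameBlock {n : ℕ} (f : ZMod n → ℤ) (y y' : ZMod n) : Prop :=
  (∃ m : ℕ, y' = y + (m : ZMod n) ∧ ∀ i : ℕ, i ≤ m → f (y + (i : ZMod n)) = f y) ∨
  (∃ m : ℕ, y = y' + (m : ZMod n) ∧ ∀ i : ℕ, i ≤ m → f (y' + (i : ZMod n)) = f y')

/-- The maximal conflux containing `p`. -/
def maxConflux {n : ℕ} (δ ε : ZMod n → ℤ) (p : Vtx n) : Set (Vtx n) :=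
  {q | SameBlock ε q.1 p.1 ∧ SameBlock δ q.2 p.2}

/-- The horizontal escape distance: the length of a shortest directed path
from `p` to a vertex outside its maximal conflux using only arcs that change
the first coordinate. -/
noncomputable def HE {n : ℕ} (δ ε : ZMod n → ℤ) (p : Vtx n) : ℕ :=
  sInf {m : ℕ | (p.1 + (((m : ℤ) * δ p.2 : ℤ) : ZMod n), p.2) ∉ maxConflux δ ε p}

/-- The vertical escape distance. -/
noncomputable def VE {n : ℕ} (δ ε : ZMod n → ℤ) (p : Vtx n) : ℕ :=
  sInf {m : ℕ | (p.1, p.2 + (((m : ℤ) * ε p.1 : ℤ) : ZMod n)) ∉ maxConflux δ ε p}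

/-- `w` is a main shadow of `v`. -/
def IsMainShadow {n : ℕ} (δ ε : ZMod n → ℤ) (v w : Vtx n) : Prop :=
  w ∈ MD δ ε v ∧ ty δ ε w = ty δ ε v ∧ VE δ ε v = HE δ ε w

/-- `w` is a secondary shadow of `v`. -/
def IsSecShadow {n : ℕ} (δ ε : ZMod n → ℤ) (v w : Vtx n) : Prop :=
  w ∈ SD δ ε v ∧ ty δ ε w = -(ty δ ε v) ∧ VE δ ε v = HE δ ε w

/-- `w` is a diagonal shadow of `v`. -/
def IsDiagShadow {n : ℕ} (δ ε : ZMod n → ℤ) (v w : Vtx n) : Prop :=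
  IsMainShadow δ ε v w ∨ IsSecShadow δ ε v w

/-! ### `k`-regular orientations and the conflux digraph -/

/-- `f` is, after the cyclic offset `c`, constant on consecutive blocks of `k`
indices with adjacent blocks taking opposite values in `{1, -1}`.  A
straight-ahead orientation is `k`-regularly oriented iff `2k ∣ n` and both `δ`
and `ε` satisfy this for some offset. -/
def BlockAltAt {n : ℕ} (k : ℕ) (f : ZMod n → ℤ) (c : ZMod n) : Prop :=
  ∀ m : ℕ, f (c + (m : ZMod n)) = if m / k % 2 = 0 then 1 else -1

/-- The alternating direction function of the conflux digraph
(a 1-regularly oriented grid). -/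
def altF (m : ℕ) : ZMod m → ℤ := fun q => if q.val % 2 = 0 then 1 else -1

/-- The index of the block (of length `k`, after offset `c`) containing `x`. -/
def blk {n : ℕ} (k : ℕ) (c x : ZMod n) : ZMod (n / k) :=
  (((x - c).val / k : ℕ) : ZMod (n / k))

/-- The projection sending a vertex of a `k`-regularly oriented grid to the
vertex of the conflux digraph corresponding to its maximal conflux. -/
def confMap {n : ℕ} (k : ℕ) (cδ cε : ZMod n) (p : Vtx n) : Vtx (n / k) :=
  (blk k cε p.1, blk k cδ p.2)

/-- The translated main diagonal `MD_s(v, d) = {x : x - s·(τ(v)+d)/2 ∈ MD(v)}`. -/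
def MDs {n : ℕ} (δ ε : ZMod n → ℤ) (s : ℕ) (v : Vtx n) (d : ℤ × ℤ) : Set (Vtx n) :=
  {x | (x.1 - (((s : ℤ) * (((ty δ ε v).1 + d.1) / 2) : ℤ) : ZMod n),
        x.2 - (((s : ℤ) * (((ty δ ε v).2 + d.2) / 2) : ℤ) : ZMod n)) ∈ MD δ ε v}

/-- The diagonal distance `𝔡(u, v)` between vertices of opposite types. -/
noncomputable def ddist {n : ℕ} (δ ε : ZMod n → ℤ) (u v : Vtx n) : ℕ :=
  sInf {t : ℕ | ∃ d : ℤ × ℤ, IsType d ∧ Orth (ty δ ε u) d ∧ v ∈ MDs δ ε t u d}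

/-- The set `B(u, v) = ⋃_{i ≤ 𝔡(u,v)} MD_i(u, d)`, where `d` is chosen so that
`v ∈ MD_{𝔡(u,v)}(u, d)`. -/
noncomputable def BSet {n : ℕ} (δ ε : ZMod n → ℤ) (u v : Vtx n) : Set (Vtx n) :=
  {x | ∃ d : ℤ × ℤ, IsType d ∧ Orth (ty δ ε u) d ∧ v ∈ MDs δ ε (ddist δ ε u v) u d ∧
       ∃ i : ℕ, i ≤ ddist δ ε u v ∧ x ∈ MDs δ ε i u d}

/-! ### Mirrors -/

/-- The mirror of the diagonal shadow given by a robber at `v` and a cop at `c`: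
the diagonal line through `(v₁, c₂)` with direction `d`. -/
def MirrorOf {n : ℕ} (v c : Vtx n) (d : ℤ × ℤ) : Set (Vtx n) :=
  {p | ∃ r : ℤ, p.1 = v.1 + ((r * d.1 : ℤ) : ZMod n) ∧ p.2 = c.2 + ((r * d.2 : ℤ) : ZMod n)}

/-- Translation of a set of grid vertices by an integer vector. -/
def shiftSet {n : ℕ} (w : ℤ × ℤ) (L : Set (Vtx n)) : Set (Vtx n) :=
  (fun p : Vtx n => (p.1 + (w.1 : ZMod n), p.2 + (w.2 : ZMod n))) '' L

/-!
The cops can stay put: a robber forced to move along arcs leaves `B(K₁, K₂)` on his own.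
Project the grid onto the conflux digraph `𝔇`, a 1-regularly oriented grid of even size.
`B(K₁, K₂)` lies in the band of vertices of `𝔇` whose diagonal index relative to `K₁` is
`0`, `1` or `2`, and every arc of `𝔇` changes this index by `±1`. Because the product of the two
directions at a vertex of `𝔇` alternates with the parity of its index, every arc inside the band
strictly decreases a rank in `{1, 2, 3}`; between two such arcs the robber's
progress through his current conflux strictly increases. So the pair (rank, remaining progress)
decreases lexicographically at every move, which cannot go on forever. That the indices
`0, 1, 2` are distinct modulo `n / k` follows from `𝔡(K₁, K₂) = 2`, which rules out `n / k = 2`.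
-/

section Signs

variable {m : ℕ}

theorem altF_eq_one_or_neg_one (q : ZMod m) : altF m q = 1 ∨ altF m q = -1 := by
  unfold altF; split <;> simp

theorem isType_ty_altF (u : Vtx m) : IsType (ty (altF m) (altF m) u) :=
  ⟨altF_eq_one_or_neg_one u.2, altF_eq_one_or_neg_one u.1⟩

theorem altF_natCast {i : ℕ} (hi : i < m) : altF m i = if i % 2 = 0 then 1 else -1 := by
  simp [altF, ZMod.val_natCast_of_lt hi]

variable [NeZero m]

theorem altF_add (hm : 2 ∣ m) (x y : ZMod m) : altF m (x + y) = altF m x * altF m y := by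
  simp only [altF, ZMod.val_add, Nat.mod_mod_of_dvd _ hm]
  rcases Nat.mod_two_eq_zero_or_one x.val with h | h <;>
    rcases Nat.mod_two_eq_zero_or_one y.val with h' | h' <;> simp [Nat.add_mod, h, h']

theorem altF_neg (hm : 2 ∣ m) (x : ZMod m) : altF m (-x) = altF m x := by
  have h := altF_add hm (-x) x
  rw [neg_add_cancel, show altF m 0 = 1 by simp [altF]] at h
  rcases altF_eq_one_or_neg_one x with hx | hx <;> rw [hx] at h ⊢ <;> linarith

theorem altF_sub (hm : 2 ∣ m) (x y : ZMod m) : altF m (x - y) = altF m x * altF m y := by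
  rw [sub_eq_add_neg, altF_add hm, altF_neg hm]

theorem altF_intCast_mul (hm : 2 ∣ m) {s : ℤ} (hs : s = 1 ∨ s = -1) (x : ZMod m) :
    altF m ((s : ZMod m) * x) = altF m x := by
  rcases hs with rfl | rfl <;> simp [altF_neg hm]

theorem altF_intCast (hm : 2 ∣ m) {s : ℤ} (hs : s = 1 ∨ s = -1) : altF m (s : ZMod m) = -1 := by
  have h1 : altF m 1 = -1 := by
    simpa using altF_natCast (m := m) (i := 1) (by have := Nat.pos_of_neZero m; omega)
  rcases hs with rfl | rfl <;> simp [altF_neg hm, h1]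

end Signs

section DiagonalIndex

variable {m : ℕ} (δ' ε' : ZMod m → ℤ)

/-- The index `i` of the diagonal `MD_i(u, d)` through `q`; it does not depend on `d`. -/
def diagIndex (u q : Vtx m) : ZMod m :=
  ((ty δ' ε' u).1 : ZMod m) * (q.1 - u.1) + ((ty δ' ε' u).2 : ZMod m) * (q.2 - u.2)

theorem mul_half_add_mul_half {a b d₁ d₂ : ℤ} (ha : a = 1 ∨ a = -1) (hb : b = 1 ∨ b = -1)
    (hd₁ : d₁ = 1 ∨ d₁ = -1) (hd₂ : d₂ = 1 ∨ d₂ = -1) (ho : a * d₁ + b * d₂ = 0) :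
    a * ((a + d₁) / 2) + b * ((b + d₂) / 2) = 1 := by
  rcases ha with rfl | rfl <;> rcases hb with rfl | rfl <;> rcases hd₁ with rfl | rfl <;>
    rcases hd₂ with rfl | rfl <;> revert ho <;> norm_num

theorem diagIndex_of_mem_MDs {u x : Vtx m} {i : ℕ} {d : ℤ × ℤ} (hu : IsType (ty δ' ε' u))
    (hd : IsType d) (ho : Orth (ty δ' ε' u) d) (hx : x ∈ MDs δ' ε' i u d) :
    diagIndex δ' ε' u x = i := by
  obtain ⟨r, h₁, h₂⟩ := hx
  dsimp only at h₁ h₂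
  unfold diagIndex IsType Orth ty at *
  generalize δ' u.2 = a at *
  generalize ε' u.1 = b at *
  obtain ⟨ha, hb⟩ := hu
  have hhalf := congrArg (Int.cast (R := ZMod m)) (mul_half_add_mul_half ha hb hd.1 hd.2 ho)
  have haa : (a : ZMod m) * a = 1 := by rcases ha with rfl | rfl <;> simp
  have hbb : (b : ZMod m) * b = 1 := by rcases hb with rfl | rfl <;> simp
  push_cast at h₁ h₂ hhalf
  linear_combination (a : ZMod m) * h₁ + (b : ZMod m) * h₂ + (i : ZMod m) * hhalf
    + r * (haa - hbb)

theorem exists_diagIndex_eq_of_mem_BSet {u v x : Vtx m} (hu : IsType (ty δ' ε' u))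
    (hx : x ∈ BSet δ' ε' u v) : ∃ i ≤ ddist δ' ε' u v, diagIndex δ' ε' u x = i := by
  obtain ⟨d, hd, ho, -, i, hi, hxi⟩ := hx
  exact ⟨i, hi, diagIndex_of_mem_MDs δ' ε' hu hd ho hxi⟩

theorem four_le_of_ddist_eq_two {u v : Vtx m} (hm : 2 ∣ m) (hm₀ : m ≠ 0)
    (h : ddist δ' ε' u v = 2) : 4 ≤ m := by
  by_contra hlt
  obtain rfl : m = 2 := by omega
  have hmem := Nat.sInf_mem (s := {t : ℕ | ∃ d : ℤ × ℤ, IsType d ∧ Orth (ty δ' ε' u) d ∧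
    v ∈ MDs δ' ε' t u d}) (Nat.nonempty_of_sInf_eq_succ h)
  rw [← ddist, h] at hmem
  obtain ⟨d, hd, ho, hv⟩ := hmem
  -- in `ZMod 2` the shift by `2 · (τ(u) + d)/2` vanishes, so `v ∈ MD_0(u, d)`
  have h0 : ddist δ' ε' u v ≤ 0 := Nat.sInf_le ⟨d, hd, ho, by
    have h2 : (2 : ZMod 2) = 0 := rfl
    simpa [MDs, h2] using hv⟩
  omega

end DiagonalIndex

section Band

/-- The rank of a vertex of the conflux digraph on the diagonal of index `i ∈ {0, 1, 2}` of the
band, where `A = ±1` is the change of index along its horizontal out-arc: on a boundary diagonal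
the rank is `3` if both out-arcs point into the band and `1` if both leave it. -/
def bandRank (i : ℕ) (A : ℤ) : ℕ :=
  if i = 1 then 2 else if A = (if i = 0 then 1 else -1) then 3 else 1

theorem bandRank_lt_of_horizontal {i i' : ℕ} {A : ℤ} (hi : i ≤ 2) (hi' : i' ≤ 2)
    (hA : A = 1 ∨ A = -1) (h : (i' : ℤ) = i + A) : bandRank i' A < bandRank i A := by
  interval_cases i <;> interval_cases i' <;> rcases hA with rfl | rfl <;>
    simp_all [bandRank]

theorem bandRank_lt_of_vertical {i i' : ℕ} {A D : ℤ} (hi : i ≤ 2) (hi' : i' ≤ 2)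
    (hA : A = 1 ∨ A = -1) (hD : D = 1 ∨ D = -1) (hAD : A * D = if i % 2 = 0 then 1 else -1)
    (h : (i' : ℤ) = i + D) : bandRank i' (-A) < bandRank i A := by
  interval_cases i <;> interval_cases i' <;> rcases hA with rfl | rfl <;>
    rcases hD with rfl | rfl <;> simp_all [bandRank]

theorem natCast_eq_add_of_zmod {m : ℕ} (hm : 4 ≤ m) {i i' : ℕ} (hi : i ≤ 2) (hi' : i' ≤ 2)
    {D : ℤ} (hD : D = 1 ∨ D = -1) (h : (i' : ZMod m) = i + D) : (i' : ℤ) = i + D := by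
  have hdvd : ((i' - i - D : ℤ) : ZMod m) = 0 := by push_cast; rw [h]; ring
  rw [ZMod.intCast_zmod_eq_zero_iff_dvd] at hdvd
  have := Int.eq_zero_of_abs_lt_dvd hdvd (by
    rw [abs_lt]; rcases hD with rfl | rfl <;> constructor <;> omega)
  linarith

variable {m : ℕ}

theorem altF_mul_altF_eq_one_or_neg_one (x y : ZMod m) :
    altF m x * altF m y = 1 ∨ altF m x * altF m y = -1 := by
  rcases altF_eq_one_or_neg_one x with h | h <;> rcases altF_eq_one_or_neg_one y with h' | h' <;>
    simp [h, h']

theorem altF_diagIndex [NeZero m] (hm : 2 ∣ m) (u q : Vtx m) :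
    altF m (diagIndex (altF m) (altF m) u q) =
      altF m u.1 * altF m u.2 * (altF m q.1 * altF m q.2) := by
  simp only [diagIndex, ty]
  rw [altF_add hm, altF_intCast_mul hm (altF_eq_one_or_neg_one _),
    altF_intCast_mul hm (altF_eq_one_or_neg_one _), altF_sub hm, altF_sub hm]
  ring

def confRank (u q : Vtx m) : ℕ :=
  bandRank (diagIndex (altF m) (altF m) u q).val (altF m u.2 * altF m q.2)

theorem confRank_lt_of_adj (hm : 2 ∣ m) (hm₄ : 4 ≤ m) {u q q' : Vtx m}
    (hq : (diagIndex (altF m) (altF m) u q).val ≤ 2)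
    (hq' : (diagIndex (altF m) (altF m) u q').val ≤ 2)
    (hadj : Adj (altF m) (altF m) q q') : confRank u q' < confRank u q := by
  have : NeZero m := ⟨by omega⟩
  have hi := ZMod.natCast_zmod_val (diagIndex (altF m) (altF m) u q)
  have hi' := ZMod.natCast_zmod_val (diagIndex (altF m) (altF m) u q')
  unfold confRank
  rcases hadj with ⟨h₁, h₂⟩ | ⟨h₁, h₂⟩
  · have hstep : ((diagIndex (altF m) (altF m) u q').val : ZMod m) =
        (diagIndex (altF m) (altF m) u q).val + ((altF m u.2 * altF m q.2 : ℤ) : ZMod m) := by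
      rw [hi, hi']; simp only [diagIndex, ty, h₁, h₂]; push_cast; ring
    have hA := altF_mul_altF_eq_one_or_neg_one u.2 q.2
    rw [h₂]
    exact bandRank_lt_of_horizontal hq hq' hA (natCast_eq_add_of_zmod hm₄ hq hq' hA hstep)
  · have hstep : ((diagIndex (altF m) (altF m) u q').val : ZMod m) =
        (diagIndex (altF m) (altF m) u q).val + ((altF m u.1 * altF m q.1 : ℤ) : ZMod m) := by
      rw [hi, hi']; simp only [diagIndex, ty, h₁, h₂]; push_cast; ring
    have hD := altF_mul_altF_eq_one_or_neg_one u.1 q.1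
    have hflip : altF m u.2 * altF m q'.2 = -(altF m u.2 * altF m q.2) := by
      rw [h₂, altF_add hm, altF_intCast hm (altF_eq_one_or_neg_one _)]; ring
    have hAD : altF m u.2 * altF m q.2 * (altF m u.1 * altF m q.1) =
        if (diagIndex (altF m) (altF m) u q).val % 2 = 0 then 1 else -1 := by
      rw [← altF_natCast (m := m) (by omega), hi, altF_diagIndex hm]; ring
    rw [hflip]
    exact bandRank_lt_of_vertical hq hq' (altF_mul_altF_eq_one_or_neg_one u.2 q.2) hD hAD
      (natCast_eq_add_of_zmod hm₄ hq hq' hD hstep)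

end Band

section Grid

variable {n k : ℕ}

/-- The position of `x` in its block of `k` indices (after the offset `c`), counted in the
direction `d`. -/
def orientedOffset (k : ℕ) (c : ZMod n) (d : ℤ) (x : ZMod n) : ℕ :=
  if d = 1 then (x - c).val % k else k - 1 - (x - c).val % k

theorem orientedOffset_lt (hk : 0 < k) (c : ZMod n) (d : ℤ) (x : ZMod n) :
    orientedOffset k c d x < k := by
  have := Nat.mod_lt (x - c).val hk
  unfold orientedOffset; split <;> omega

variable [NeZero n]

theorem blk_add_one_cases (hk : k ∣ n) (c x : ZMod n) :
    (blk k c (x + 1) = blk k c x ∧ (x + 1 - c).val % k = (x - c).val % k + 1) ∨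
      blk k c (x + 1) = blk k c x + 1 := by
  have hval : (x + 1 - c).val = ((x - c).val + 1) % (k * (n / k)) := by
    rw [Nat.mul_div_cancel' hk, add_sub_right_comm, ZMod.val_add, ZMod.val_one_eq_one_mod,
      Nat.add_mod_mod]
  simp only [blk, hval, Nat.mod_mul_right_div_self, Nat.mod_mul_right_mod, ZMod.natCast_mod]
  by_cases hdvd : k ∣ (x - c).val + 1
  · right
    rw [Nat.succ_div_of_dvd hdvd, Nat.cast_succ]
  · left
    have hdiv := Nat.succ_div_of_not_dvd hdvd
    refine ⟨by rw [hdiv], ?_⟩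
    have h₁ := Nat.mod_add_div ((x - c).val + 1) k
    have h₂ := Nat.mod_add_div (x - c).val k
    rw [hdiv] at h₁
    omega

theorem blk_add_cases (hk : k ∣ n) (c x : ZMod n) {d : ℤ} (hd : d = 1 ∨ d = -1) :
    (blk k c (x + d) = blk k c x ∧
        orientedOffset k c d (x + d) = orientedOffset k c d x + 1) ∨
      blk k c (x + d) = blk k c x + d := by
  rcases hd with rfl | rfl
  · simpa [orientedOffset] using blk_add_one_cases hk c x
  · -- a step down from `x` is a step up from `x - 1`
    have hk₀ : 0 < k := Nat.pos_of_dvd_of_pos hk (Nat.pos_of_neZero n)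
    have hx : x = x + ((-1 : ℤ) : ZMod n) + 1 := by push_cast; ring
    rcases blk_add_one_cases hk c (x + ((-1 : ℤ) : ZMod n)) with ⟨hb, ho⟩ | hb <;>
      rw [← hx] at hb
    · rw [← hx] at ho
      have := Nat.mod_lt (x - c).val hk₀
      left
      refine ⟨hb.symm, ?_⟩
      simp only [orientedOffset, if_neg (show (-1 : ℤ) ≠ 1 by norm_num)]
      omega
    · right
      rw [hb]; push_cast; ring

theorem BlockAltAt.eq_altF_blk {f : ZMod n → ℤ} {c : ZMod n} (hm : 2 ∣ n / k)
    (hf : BlockAltAt k f c) (y : ZMod n) : f y = altF (n / k) (blk k c y) := by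
  have h := hf (y - c).val
  rw [ZMod.natCast_zmod_val, add_sub_cancel] at h
  simp only [h, altF, blk, ZMod.val_natCast, Nat.mod_mod_of_dvd _ hm]

end Grid

section Escape

variable {n k : ℕ} {δ ε : ZMod n → ℤ} {cδ cε : ZMod n}

/-- How far `p` has advanced through its maximal conflux in the directions of its out-arcs. -/
def progress (k : ℕ) (δ ε : ZMod n → ℤ) (cδ cε : ZMod n) (p : Vtx n) : ℕ :=
  orientedOffset k cε (δ p.2) p.1 + orientedOffset k cδ (ε p.1) p.2

theorem Adj.confMap_cases [NeZero n] (hk : k ∣ n) (hm : 2 ∣ n / k) (hδ : BlockAltAt k δ cδ)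
    (hε : BlockAltAt k ε cε) {p q : Vtx n} (h : Adj δ ε p q) :
    (confMap k cδ cε q = confMap k cδ cε p ∧
        progress k δ ε cδ cε q = progress k δ ε cδ cε p + 1) ∨
      Adj (altF (n / k)) (altF (n / k)) (confMap k cδ cε p) (confMap k cδ cε q) := by
  have hδ' := hδ.eq_altF_blk hm
  have hε' := hε.eq_altF_blk hm
  rcases h with ⟨h₁, h₂⟩ | ⟨h₁, h₂⟩
  · rcases blk_add_cases hk cε p.1 (d := δ p.2) (by rw [hδ']; exact altF_eq_one_or_neg_one _)
      with ⟨hb, ho⟩ | hb <;> rw [← h₁] at hb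
    · have hεq : ε q.1 = ε p.1 := by rw [hε', hε', hb]
      rw [← h₁] at ho
      left
      refine ⟨Prod.ext hb (by simp [confMap, h₂]), ?_⟩
      simp only [progress, h₂, hεq, ho]
      ring
    · right; left
      exact ⟨by simpa [confMap, hδ'] using hb, by simp [confMap, h₂]⟩
  · rcases blk_add_cases hk cδ p.2 (d := ε p.1) (by rw [hε']; exact altF_eq_one_or_neg_one _)
      with ⟨hb, ho⟩ | hb <;> rw [← h₂] at hb
    · have hδq : δ q.2 = δ p.2 := by rw [hδ', hδ', hb]
      rw [← h₂] at ho
      left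
      refine ⟨Prod.ext (by simp [confMap, h₁]) hb, ?_⟩
      simp only [progress, h₁, hδq, ho]
      ring
    · right; right
      exact ⟨by simp [confMap, h₁], by simpa [confMap, hε'] using hb⟩

theorem exists_two_lt_diagIndex [NeZero n] (hk : k ∣ n) (hm : 2 ∣ n / k) (hm₄ : 4 ≤ n / k)
    (hδ : BlockAltAt k δ cδ) (hε : BlockAltAt k ε cε) (u : Vtx (n / k)) {rob : ℕ → Vtx n}
    (hrob : ∀ t, Adj δ ε (rob t) (rob (t + 1))) :
    ∃ t, 2 < (diagIndex (altF (n / k)) (altF (n / k)) u (confMap k cδ cε (rob t))).val := by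
  by_contra! hband
  have hk₀ : 0 < k := Nat.pos_of_dvd_of_pos hk (Nat.pos_of_neZero n)
  have hprog (p : Vtx n) : progress k δ ε cδ cε p < 2 * k := by
    have := orientedOffset_lt hk₀ cε (δ p.2) p.1
    have := orientedOffset_lt hk₀ cδ (ε p.1) p.2
    unfold progress; omega
  -- lexicographic potential: conflux rank first, then the remaining progress in the conflux
  obtain ⟨t, ht⟩ := WellFounded.not_rel_apply_succ (r := (· < ·)) fun t =>
    confRank u (confMap k cδ cε (rob t)) * (2 * k) + (2 * k - progress k δ ε cδ cε (rob t))
  apply ht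
  have := hprog (rob t)
  have := hprog (rob (t + 1))
  rcases (hrob t).confMap_cases hk hm hδ hε with ⟨hc, hp⟩ | hadj
  · simp only [hc, hp]
    omega
  · have hr := confRank_lt_of_adj hm hm₄ (hband t) (hband (t + 1)) hadj
    have := Nat.mul_le_mul_right (2 * k) (Nat.succ_le_of_lt hr)
    rw [Nat.succ_mul] at this
    omega

end Escape

theorem land_one_general
    (n k : ℕ) (hkn : k < n) (hdvd : 2 * k ∣ n)
    (δ ε : ZMod n → ℤ) (cδ cε : ZMod n)
    (hδ : BlockAltAt k δ cδ) (hε : BlockAltAt k ε cε)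
    (P₁ P₂ : Vtx (n / k))
    (hdd : ddist (altF (n / k)) (altF (n / k)) P₁ P₂ = 2)
    (K₁ K₂ : Set (Vtx n))
    (r₀ : Vtx n) :
    EnsureFrom (Adj δ ε) (Adj δ ε)
      (Sum.elim (fun i : {v : Vtx n // MainCorner δ ε K₁ v} => i.val)
                (fun i : {v : Vtx n // MainCorner δ ε K₂ v} => i.val)) r₀
      (fun cops rob =>
        ∃ t, confMap k cδ cε (rob t) ∉ BSet (altF (n / k)) (altF (n / k)) P₁ P₂) := by
  have : NeZero n := ⟨by omega⟩
  have hk : k ∣ n := dvd_of_mul_left_dvd hdvd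
  have hk₀ : 0 < k := Nat.pos_of_dvd_of_pos hk (by omega)
  have hm : 2 ∣ n / k := Nat.dvd_div_of_mul_dvd (mul_comm 2 k ▸ hdvd)
  have hm₄ : 4 ≤ n / k :=
    four_le_of_ddist_eq_two _ _ hm (Nat.div_pos hkn.le hk₀).ne' hdd
  refine ⟨fun _ => Sum.elim (fun i => i.val) (fun i => i.val), fun rob _ hrob =>
    ⟨fun t _ => by cases t <;> exact Or.inl rfl, ?_⟩⟩
  obtain ⟨t, ht⟩ := exists_two_lt_diagIndex hk hm hm₄ hδ hε P₁ hrob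
  refine ⟨t, fun hB => ?_⟩
  obtain ⟨i, hi, hidx⟩ := exists_diagIndex_eq_of_mem_BSet _ _ (isType_ty_altF P₁) hB
  rw [hidx, ZMod.val_natCast_of_lt (by omega)] at ht
  omega

/-- (Lemma `land1`.)  In the forced-move game on a
`k`-regularly oriented grid, let `K₁, K₂` be maximal confluxes of opposite
types at diagonal distance `2` whose main corners are all occupied by cops.
If the robber is in `B(K₁, K₂)`, the cops can force him to eventually occupy
a conflux outside `B(K₁, K₂)`. -/
theorem land_one
    (n k : ℕ) (hk : 2 ≤ k) (hkn : k < n) (hdvd : 2 * k ∣ n)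
    (δ ε : ZMod n → ℤ) (cδ cε : ZMod n)
    (hδ : BlockAltAt k δ cδ) (hε : BlockAltAt k ε cε)
    (P₁ P₂ : Vtx (n / k))
    (hτ : ty (altF (n / k)) (altF (n / k)) P₁ = -(ty (altF (n / k)) (altF (n / k)) P₂))
    (hdd : ddist (altF (n / k)) (altF (n / k)) P₁ P₂ = 2)
    (K₁ K₂ : Set (Vtx n))
    (hK₁ : K₁ = confMap k cδ cε ⁻¹' {P₁}) (hK₂ : K₂ = confMap k cδ cε ⁻¹' {P₂})
    (r₀ : Vtx n)
    (hr : confMap k cδ cε r₀ ∈ BSet (altF (n / k)) (altF (n / k)) P₁ P₂) :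
    EnsureFrom (Adj δ ε) (Adj δ ε)
      (Sum.elim (fun i : {v : Vtx n // MainCorner δ ε K₁ v} => i.val)
                (fun i : {v : Vtx n // MainCorner δ ε K₂ v} => i.val)) r₀
      (fun cops rob =>
        ∃ t, confMap k cδ cε (rob t) ∉ BSet (altF (n / k)) (altF (n / k)) P₁ P₂) :=
  land_one_general n k hkn hdvd δ ε cδ cε hδ hε P₁ P₂ hdd K₁ K₂ r₀

end CopsPaper
end

section
/- Consider the forced-move cops-and-robbers game on a toroidal grid C_n □ C_n with a straight-ahead orientation. Let S be a stream with boundary lines ℓ₁ and ℓ₂, and suppose the robber occupies a vertex of S at distance d₁ from ℓ₁ and distance d₂ from ℓ₂ (distances in the underlying undirected grid). Let v₁ and v₂ be the closest vertices of ℓ₁ and ℓ₂, respectively, to the robber's position. Suppose there are distinct cops C₁ and C₂ such that C₁ can reach v₁ in at most d₁ moves and C₂ can reach v₂ in at most d₂ moves (each move being staying put or following an arc). Then using C₁ and C₂ the cops can ensure that the robber is captured or confined to S. -/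
namespace CopsPaper

/-! ### Auxiliary lemmas for the stream trap -/

lemma reachIn_tail {α : Type*} {A : α → α → Prop} {m : ℕ} {u v : α}
    (h : ReachIn A (m + 1) u v) : ∃ u', Step A u u' ∧ ReachIn A m u' v := by
  obtain ⟨f, h0, hm, hs⟩ := h
  exact ⟨f 1, h0 ▸ hs 0 (by omega),
    ⟨fun j => f (j + 1), rfl, hm, fun t ht => hs (t + 1) (by omega)⟩⟩

lemma reachIn_pad {α : Type*} {A : α → α → Prop} {m m' : ℕ} {u v : α}
    (h : ReachIn A m u v) (hle : m ≤ m') : ReachIn A m' u v := by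
  obtain ⟨f, h0, hm, hs⟩ := h
  refine ⟨fun j => if j ≤ m' - m then u else f (j - (m' - m)), by simp, ?_, ?_⟩
  · by_cases h' : m' ≤ m' - m
    · have hm0 : m = 0 := by omega
      subst hm0
      simp only [if_pos h']
      rw [← h0]; exact hm
    · simp only [if_neg h']
      have e : m' - (m' - m) = m := by omega
      rw [e]; exact hm
  · intro t ht
    by_cases h1 : t + 1 ≤ m' - m
    · simp only [if_pos (by omega : t ≤ m' - m), if_pos h1]; exact Or.inl rfl
    · by_cases h2 : t ≤ m' - m
      · have hm1 : 1 ≤ m := by omega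
        simp only [if_pos h2, if_neg h1]
        have e : t + 1 - (m' - m) = 1 := by omega
        rw [e, ← h0]
        exact hs 0 (by omega)
      · simp only [if_neg h2, if_neg h1]
        have e1 : t + 1 - (m' - m) = (t - (m' - m)) + 1 := by omega
        rw [e1]
        exact hs _ (by omega)

lemma reachIn_snoc {α : Type*} {A : α → α → Prop} {m : ℕ} {u v w : α}
    (h : ReachIn A m u v) (ha : A v w) : ReachIn A (m + 1) u w := by
  obtain ⟨f, h0, hm, hs⟩ := h
  refine ⟨fun j => if j ≤ m then f j else w, by simp [h0], by simp, ?_⟩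
  intro t ht
  by_cases h1 : t + 1 ≤ m
  · simp only [if_pos (by omega : t ≤ m), if_pos h1]; exact hs t (by omega)
  · have e : t = m := by omega
    subst e
    simp only [if_pos le_rfl, if_neg h1]
    exact Or.inr (hm ▸ ha)

lemma reachIn_maintain {α : Type*} {A : α → α → Prop} {u v v' : α} {m m' : ℕ}
    (hm : 1 ≤ m) (h : ReachIn A m u v)
    (hc : (v' = v ∧ m ≤ m' + 1) ∨ (A v v' ∧ m' = m)) :
    ∃ u', Step A u u' ∧ ReachIn A m' u' v' := by
  obtain ⟨k, rfl⟩ : ∃ k, m = k + 1 := ⟨m - 1, by omega⟩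
  obtain ⟨u', hstep, hre⟩ := reachIn_tail h
  rcases hc with ⟨rfl, hle⟩ | ⟨ha, rfl⟩
  · exact ⟨u', hstep, reachIn_pad hre (by omega)⟩
  · exact ⟨u', hstep, reachIn_snoc hre ha⟩

lemma cdist_le_iff {n : ℕ} [NeZero n] {a b : ZMod n} {d : ℕ} :
    cdist a b ≤ d ↔ ∃ k : ℤ, k.natAbs ≤ d ∧ b = a + (k : ZMod n) := by
  constructor
  · intro h
    unfold cdist at h
    rcases le_total ((b - a).val) ((a - b).val) with hc | hc
    · rw [min_eq_left hc] at h
      refine ⟨((b - a).val : ℤ), by simpa only [Int.natAbs_natCast] using h, ?_⟩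
      have e : (((b - a).val : ℕ) : ZMod n) = b - a := by
        rw [ZMod.natCast_val, ZMod.cast_id]
      push_cast
      rw [e]; ring
    · rw [min_eq_right hc] at h
      refine ⟨-(((a - b).val : ℕ) : ℤ), by
        simpa only [Int.natAbs_neg, Int.natAbs_natCast] using h, ?_⟩
      have e : (((a - b).val : ℕ) : ZMod n) = a - b := by
        rw [ZMod.natCast_val, ZMod.cast_id]
      push_cast
      rw [e]; ring
  · rintro ⟨k, hk, rfl⟩
    unfold cdist
    rcases le_or_gt 0 k with h0 | h0
    · have e : a + (k : ZMod n) - a = ((k.toNat : ℕ) : ZMod n) := by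
        have h1 : ((k.toNat : ℤ) : ZMod n) = (k : ZMod n) := by
          rw [Int.toNat_of_nonneg h0]
        push_cast at h1
        rw [add_sub_cancel_left]; exact h1.symm
      refine le_trans (min_le_left _ _) ?_
      rw [e, ZMod.val_natCast]
      have := Nat.mod_le k.toNat n
      omega
    · have e : a - (a + (k : ZMod n)) = (((-k).toNat : ℕ) : ZMod n) := by
        have h1 : (((-k).toNat : ℤ) : ZMod n) = ((-k : ℤ) : ZMod n) := by
          rw [Int.toNat_of_nonneg (by omega)]
        push_cast at h1
        rw [h1]; ring
      refine le_trans (min_le_right _ _) ?_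
      rw [e, ZMod.val_natCast]
      have := Nat.mod_le (-k).toNat n
      omega

lemma cdist_eq_zero {n : ℕ} [NeZero n] {a b : ZMod n} (h : cdist a b = 0) : a = b := by
  unfold cdist at h
  rcases Nat.min_eq_zero_iff.mp h with h | h
  · have : b - a = 0 := (ZMod.val_eq_zero _).mp h
    exact (sub_eq_zero.mp this).symm
  · have : a - b = 0 := (ZMod.val_eq_zero _).mp h
    exact sub_eq_zero.mp this

lemma cdist_self {n : ℕ} (a : ZMod n) : cdist a a = 0 := by simp [cdist]

lemma cdist_add_pm {n : ℕ} [NeZero n] {a b : ZMod n} {e : ℤ} (he : PM e) :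
    cdist a b ≤ cdist (a + (e : ZMod n)) b + 1 := by
  obtain ⟨k, hk, hb⟩ := cdist_le_iff.mp (le_refl (cdist (a + (e : ZMod n)) b))
  refine cdist_le_iff.mpr ⟨e + k, ?_, ?_⟩
  · have h1 : e.natAbs = 1 := by rcases he with rfl | rfl <;> rfl
    have := Int.natAbs_add_le e k
    omega
  · rw [hb]; push_cast; ring

lemma Strm.cl_self {n : ℕ} {δ ε : ZMod n → ℤ} (S : Strm n δ ε) {b : ZMod n} {p : Vtx n}
    (h : S.proj p = b) : S.cl b p = p := by
  obtain ⟨x, y⟩ := p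
  unfold Strm.cl
  unfold Strm.proj at h
  split_ifs at h ⊢ <;> simp_all

lemma step_geom {n : ℕ} [NeZero n] {δ ε : ZMod n → ℤ}
    (hδ : ∀ y, PM (δ y)) (hε : ∀ x, PM (ε x)) (S : Strm n δ ε)
    {b : ZMod n} {j : ℕ} (hj : j < S.w) (hb : b = S.a + (j : ZMod n))
    {p p' : Vtx n} {i : ℕ} (hi : i < S.w) (hpi : S.proj p = S.a + (i : ZMod n))
    (hi0 : i ≠ 0) (hiw : i ≠ S.w - 1) (hadj : Adj δ ε p p') :
    p' ∈ S.verts ∧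
      ((S.cl b p' = S.cl b p ∧ cdist (S.proj p) b ≤ cdist (S.proj p') b + 1) ∨
       (Adj δ ε (S.cl b p) (S.cl b p') ∧ cdist (S.proj p') b = cdist (S.proj p) b)) := by
  have hw1 : 1 ≤ S.w := S.one_le
  obtain ⟨x, y⟩ := p
  obtain ⟨x', y'⟩ := p'
  cases hv : S.vert
  · -- horizontal stream: lines indexed by the first coordinate, direction ε
    have hproj : ∀ q : Vtx n, S.proj q = q.1 := by intro q; simp [Strm.proj, hv]
    have hclb : ∀ q : Vtx n, S.cl b q = (b, q.2) := by intro q; simp [Strm.cl, hv]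
    have hverts : ∀ q : Vtx n, q ∈ S.verts ↔ ∃ k : ℕ, k < S.w ∧ q.1 = S.a + (k : ZMod n) := by
      intro q; simp [Strm.verts, Strm.proj, hv]
    have hconstb : ε b = ε S.a := by
      have h := S.const j hj
      rw [hv] at h
      simp only [if_neg Bool.false_ne_true] at h
      rw [hb]
      exact h
    have hpx : x = S.a + (i : ZMod n) := by
      have h' := hpi; rw [hproj] at h'; exact h'
    have hconstp : ε x = ε S.a := by
      have h := S.const i hi
      rw [hv] at h
      simp only [if_neg Bool.false_ne_true] at h
      rw [hpx]; exact h
    rcases hadj with ⟨h1, h2⟩ | ⟨h1, h2⟩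
    · -- perpendicular move: x' = x + δ y, y' = y
      simp only at h1 h2
      constructor
      · rw [hverts]
        rcases hδ y with he | he
        · refine ⟨i + 1, by omega, ?_⟩
          rw [h1, hpx, he]
          push_cast
          ring
        · refine ⟨i - 1, by omega, ?_⟩
          rw [h1, hpx, he]
          have e : ((i - 1 : ℕ) : ZMod n) = (i : ZMod n) - 1 := by
            have : ((i - 1 : ℕ) : ZMod n) + 1 = (i : ZMod n) := by
              rw [show (1 : ZMod n) = ((1 : ℕ) : ZMod n) by push_cast; ring]
              rw [← Nat.cast_add]
              congr 1
              omega
            linear_combination this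
          rw [e]
          push_cast
          ring
      · left
        constructor
        · rw [hclb, hclb]
          rw [h2]
        · rw [hproj, hproj]
          simp only
          rw [h1, hpx]
          rw [← hpx]
          exact cdist_add_pm (hδ y)
    · -- move along the line: x' = x, y' = y + ε x
      simp only at h1 h2
      refine ⟨?_, Or.inr ⟨?_, ?_⟩⟩
      · rw [hverts]
        exact ⟨i, hi, by simpa [h1] using hpx⟩
      · rw [hclb, hclb]
        right
        refine ⟨rfl, ?_⟩
        simp only
        rw [h2, hconstp, ← hconstb]
      · rw [hproj, hproj]
        simp only
        rw [h1]
  · -- vertical stream: lines indexed by the second coordinate, direction δ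
    have hproj : ∀ q : Vtx n, S.proj q = q.2 := by intro q; simp [Strm.proj, hv]
    have hclb : ∀ q : Vtx n, S.cl b q = (q.1, b) := by intro q; simp [Strm.cl, hv]
    have hverts : ∀ q : Vtx n, q ∈ S.verts ↔ ∃ k : ℕ, k < S.w ∧ q.2 = S.a + (k : ZMod n) := by
      intro q; simp [Strm.verts, Strm.proj, hv]
    have hconstb : δ b = δ S.a := by
      have h := S.const j hj
      rw [hv] at h
      simp only [if_pos rfl] at h
      rw [hb]
      exact h
    have hpy : y = S.a + (i : ZMod n) := by
      have h' := hpi; rw [hproj] at h'; exact h'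
    have hconstp : δ y = δ S.a := by
      have h := S.const i hi
      rw [hv] at h
      simp only [if_pos rfl] at h
      rw [hpy]; exact h
    rcases hadj with ⟨h1, h2⟩ | ⟨h1, h2⟩
    · -- move along the line: x' = x + δ y, y' = y
      simp only at h1 h2
      refine ⟨?_, Or.inr ⟨?_, ?_⟩⟩
      · rw [hverts]
        exact ⟨i, hi, by simpa [h2] using hpy⟩
      · rw [hclb, hclb]
        left
        refine ⟨?_, rfl⟩
        simp only
        rw [h1, hconstp, ← hconstb]
      · rw [hproj, hproj]
        simp only
        rw [h2]
    · -- perpendicular move: x' = x, y' = y + ε x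
      simp only at h1 h2
      constructor
      · rw [hverts]
        rcases hε x with he | he
        · refine ⟨i + 1, by omega, ?_⟩
          rw [h2, hpy, he]
          push_cast
          ring
        · refine ⟨i - 1, by omega, ?_⟩
          rw [h2, hpy, he]
          have e : ((i - 1 : ℕ) : ZMod n) = (i : ZMod n) - 1 := by
            have : ((i - 1 : ℕ) : ZMod n) + 1 = (i : ZMod n) := by
              rw [show (1 : ZMod n) = ((1 : ℕ) : ZMod n) by push_cast; ring]
              rw [← Nat.cast_add]
              congr 1
              omega
            linear_combination this
          rw [e]
          push_cast
          ring
      · left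
        constructor
        · rw [hclb, hclb]
          rw [h1]
        · rw [hproj, hproj]
          simp only
          rw [h2, hpy]
          rw [← hpy]
          exact cdist_add_pm (hε x)

open Classical in
/-- The one-cop update: move (if possible) so as to keep a certified lazy
path of the right length to the vertex of the guarded line closest to the
robber. -/
noncomputable def updFn {n : ℕ} (δ ε : ZMod n → ℤ) (S : Strm n δ ε) (b : ZMod n)
    (u r' : Vtx n) : Vtx n :=
  if h : ∃ u', Step (Adj δ ε) u u' ∧
      ReachIn (Adj δ ε) (cdist (S.proj r') b) u' (S.cl b r') then h.choose else u

lemma updFn_step {n : ℕ} {δ ε : ZMod n → ℤ} {S : Strm n δ ε} {b : ZMod n}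
    {u r' : Vtx n} : Step (Adj δ ε) u (updFn δ ε S b u r') := by
  unfold updFn
  split_ifs with h
  · exact h.choose_spec.1
  · exact Or.inl rfl

lemma updFn_spec {n : ℕ} {δ ε : ZMod n → ℤ} {S : Strm n δ ε} {b : ZMod n}
    {u r' : Vtx n}
    (h : ∃ u', Step (Adj δ ε) u u' ∧
      ReachIn (Adj δ ε) (cdist (S.proj r') b) u' (S.cl b r')) :
    ReachIn (Adj δ ε) (cdist (S.proj r') b) (updFn δ ε S b u r') (S.cl b r') := by
  unfold updFn
  rw [dif_pos h]
  exact h.choose_spec.2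


/-- (Lemma `stream trap`.)  In the forced-move game, let
`S` be a stream with boundary lines `ℓ₁` (index `S.a`) and `ℓ₂` (index
`S.a + (w - 1)`), and suppose the robber is in `S` at (cyclic) distances `d₁`
and `d₂` from `ℓ₁` and `ℓ₂`.  If cop `C₁` can reach the vertex of `ℓ₁` closest
to the robber in at most `d₁` moves and cop `C₂` can reach the vertex of `ℓ₂`
closest to the robber in at most `d₂` moves, then using these two cops the
robber is captured or confined to `S`. -/
theorem stream_trap
    (n : ℕ) (hn : 1 ≤ n) (δ ε : ZMod n → ℤ)
    (hδ : ∀ y, PM (δ y)) (hε : ∀ x, PM (ε x))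
    (S : Strm n δ ε) (r₀ : Vtx n) (hr : r₀ ∈ S.verts)
    (c : Fin 2 → Vtx n)
    (h₁ : ReachIn (Adj δ ε) (cdist (S.proj r₀) S.a) (c 0) (S.cl S.a r₀))
    (h₂ : ReachIn (Adj δ ε) (cdist (S.proj r₀) (S.a + ((S.w - 1 : ℕ) : ZMod n)))
            (c 1) (S.cl (S.a + ((S.w - 1 : ℕ) : ZMod n)) r₀)) :
    EnsureFrom (Adj δ ε) (Adj δ ε) c r₀
      (fun cops rob => Captured cops rob ∨
        ∃ T, ∀ t, T ≤ t → rob t ∈ S.verts) := by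
  classical
  haveI : NeZero n := ⟨by omega⟩
  have hw1 : 1 ≤ S.w := S.one_le
  have hwn : S.w ≤ n := S.le_n
  set B : Fin 2 → ZMod n :=
    fun i => if i = 0 then S.a else S.a + ((S.w - 1 : ℕ) : ZMod n) with hB
  have hB0 : B 0 = S.a := by simp [hB]
  have hB1 : B 1 = S.a + ((S.w - 1 : ℕ) : ZMod n) := by norm_num [hB]
  set σ : List (Vtx n) → Fin 2 → Vtx n :=
    fun L i => (L.drop 1).foldl (updFn δ ε S (B i)) (c i) with hσ
  refine ⟨σ, ?_⟩
  intro rob hrob0 hrobstep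
  have hc0 : ∀ i, copsFrom σ c rob 0 i = c i := fun i => rfl
  have key : ∀ t i, copsFrom σ c rob (t + 1) i
      = updFn δ ε S (B i) (copsFrom σ c rob t i) (rob (t + 1)) := by
    intro t i
    cases t with
    | zero =>
      show σ ((List.range 2).map rob) i = updFn δ ε S (B i) (c i) (rob 1)
      rw [hσ]
      simp [List.range_succ]
    | succ k =>
      show σ ((List.range (k + 3)).map rob) i
          = updFn δ ε S (B i) (σ ((List.range (k + 2)).map rob) i) (rob (k + 2))
      rw [hσ]
      simp only
      rw [show k + 3 = (k + 2) + 1 from rfl, List.range_succ, List.map_append,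
        List.drop_append_of_le_length (by simp)]
      simp
  have hstep_all : ∀ t i,
      Step (Adj δ ε) (copsFrom σ c rob t i) (copsFrom σ c rob (t + 1) i) := by
    intro t i
    rw [key]
    exact updFn_step
  have main : ∀ t, (∃ t' i, copsFrom σ c rob t' i = rob t') ∨
      (rob t ∈ S.verts ∧ ∀ i, ReachIn (Adj δ ε) (cdist (S.proj (rob t)) (B i))
        (copsFrom σ c rob t i) (S.cl (B i) (rob t))) := by
    intro t
    induction t with
    | zero =>
      right
      rw [hrob0]
      refine ⟨hr, ?_⟩
      intro i
      fin_cases i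
      · show ReachIn (Adj δ ε) (cdist (S.proj r₀) (B 0)) (c 0) (S.cl (B 0) r₀)
        rw [hB0]; exact h₁
      · show ReachIn (Adj δ ε) (cdist (S.proj r₀) (B 1)) (c 1) (S.cl (B 1) r₀)
        rw [hB1]; exact h₂
    | succ t ih =>
      rcases ih with hcap | ⟨hmem, hreach⟩
      · exact Or.inl hcap
      obtain ⟨i, hi, hpi⟩ := hmem
      have hproj_ne : ∀ k : ℕ, k < S.w → S.proj (rob t) = S.a + (k : ZMod n) → i = k := by
        intro k hk hke
        have h2 : (i : ZMod n) = (k : ZMod n) := add_left_cancel (hpi.symm.trans hke)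
        have h3 := congrArg ZMod.val h2
        rwa [ZMod.val_cast_of_lt (lt_of_lt_of_le hi hwn),
             ZMod.val_cast_of_lt (lt_of_lt_of_le hk hwn)] at h3
      by_cases hA0 : i = 0
      · subst hA0
        left
        refine ⟨t, 0, ?_⟩
        have h0 : S.proj (rob t) = B 0 := by rw [hB0]; simpa using hpi
        have hz : cdist (S.proj (rob t)) (B 0) = 0 := by rw [h0]; exact cdist_self _
        have h2 := hreach 0
        rw [hz] at h2
        obtain ⟨f, hf0, hfm, -⟩ := h2
        rw [← hf0, hfm]
        exact S.cl_self h0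
      by_cases hA1 : i = S.w - 1
      · subst hA1
        left
        refine ⟨t, 1, ?_⟩
        have h0 : S.proj (rob t) = B 1 := by rw [hB1]; exact hpi
        have hz : cdist (S.proj (rob t)) (B 1) = 0 := by rw [h0]; exact cdist_self _
        have h2 := hreach 1
        rw [hz] at h2
        obtain ⟨f, hf0, hfm, -⟩ := h2
        rw [← hf0, hfm]
        exact S.cl_self h0
      have hge0 := step_geom hδ hε S (b := B 0) (j := 0) (by omega)
        (by rw [hB0]; simp) hi hpi hA0 hA1 (hrobstep t)
      have hge1 := step_geom hδ hε S (b := B 1) (j := S.w - 1) (by omega)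
        (by rw [hB1]) hi hpi hA0 hA1 (hrobstep t)
      have hm0 : 1 ≤ cdist (S.proj (rob t)) (B 0) := by
        by_contra h
        have hz : cdist (S.proj (rob t)) (B 0) = 0 := by omega
        have h0 := cdist_eq_zero hz
        exact hA0 (hproj_ne 0 (by omega) (by rw [h0, hB0]; simp))
      have hm1 : 1 ≤ cdist (S.proj (rob t)) (B 1) := by
        by_contra h
        have hz : cdist (S.proj (rob t)) (B 1) = 0 := by omega
        have h0 := cdist_eq_zero hz
        exact hA1 (hproj_ne (S.w - 1) (by omega) (by rw [h0, hB1]))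
      right
      refine ⟨hge0.1, ?_⟩
      intro i2
      fin_cases i2
      · obtain ⟨u', hs, hre⟩ := reachIn_maintain hm0 (hreach 0) hge0.2
        rw [key]
        exact updFn_spec ⟨u', hs, hre⟩
      · obtain ⟨u', hs, hre⟩ := reachIn_maintain hm1 (hreach 1) hge1.2
        rw [key]
        exact updFn_spec ⟨u', hs, hre⟩
  refine ⟨hstep_all, ?_⟩
  by_cases hcap : ∃ t' i, copsFrom σ c rob t' i = rob t'
  · obtain ⟨t', i, h⟩ := hcap
    exact Or.inl ⟨t', i, Or.inl h⟩
  · right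
    refine ⟨0, fun t _ => ?_⟩
    rcases main t with h | h
    · exact absurd h hcap
    · exact h.1

end CopsPaper
end

section
/- Consider the forced-move cops-and-robbers game on a toroidal grid C_n □ C_n with a straight-ahead orientation. Let S₁ be a stream of columns (a vertical stream), S₂ a stream of rows (a horizontal stream), and K = V(S₁) ∩ V(S₂) the corresponding conflux. Suppose the robber occupies a vertex of K, and for i ∈ {1,2} let d_i and d'_i be the distances from the robber's vertex to the boundary of K in the direction of S_i and in the opposite direction, respectively. Suppose there are distinct cops C_V, C_H and C_T such that C_V can reach the vertical guard post of K in at most d₁ + d'₂ + 1 moves, C_H can reach the horizontal guard post of K in at most d₂ + d'₁ + 1 moves, and C_T can reach either the terminal corner of K or, if K is maximal, the terminal guard post of K, in at most d₁ + d₂ moves. Then by committing C_V, C_H and C_T the cops can ensure that the robber is captured or confined to S₁ or to S₂. -/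
namespace CopsPaper

section TrapAux


variable {n : ℕ}

lemma zmod_int_inj (hn2 : 2 ≤ n) {a b : ℤ} (h : (a : ZMod n) = (b : ZMod n))
    (hab : |a - b| < (n : ℤ)) : a = b := by
  by_contra hne
  have hd : ((a - b : ℤ) : ZMod n) = 0 := by push_cast; rw [h]; ring
  have hdvd : (n : ℤ) ∣ (a - b) := by
    rwa [ZMod.intCast_zmod_eq_zero_iff_dvd] at hd
  have h0 : 0 < |a - b| := abs_pos.mpr (sub_ne_zero.mpr hne)
  have := Int.le_of_dvd h0 ((dvd_abs _ _).mpr hdvd)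
  linarith

lemma zmod_shift_n (a : ZMod n) (k : ℤ) :
    a + ((k : ℤ) : ZMod n) = a + ((k + n : ℤ) : ZMod n) := by
  push_cast
  rw [ZMod.natCast_self]
  ring

structure Win (n : ℕ) (W : Set (ZMod n)) (z₀ : ZMod n) (s : ℤ) (D D' : ℕ) : Prop where
  s_pm : s = 1 ∨ s = -1
  size : (D : ℤ) + D' + 1 < n
  mem : ∀ j : ℤ, -(D' : ℤ) ≤ j → j ≤ D → z₀ + ((j * s : ℤ) : ZMod n) ∈ W
  top : z₀ + ((((D : ℤ) + 1) * s : ℤ) : ZMod n) ∉ W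
  bot : z₀ + (((-(D' : ℤ) - 1) * s : ℤ) : ZMod n) ∉ W
  idx : ∀ z ∈ W, ∃ j : ℤ, -(D' : ℤ) ≤ j ∧ j ≤ D ∧ z = z₀ + ((j * s : ℤ) : ZMod n)

namespace Win

variable {W : Set (ZMod n)} {z₀ : ZMod n} {s : ℤ} {D D' : ℕ}

lemma n2 (hw : Win n W z₀ s D D') : 2 ≤ n := by
  have := hw.size; omega

lemma ss (hw : Win n W z₀ s D D') : s * s = 1 := by
  rcases hw.s_pm with h | h <;> simp [h]

lemma abs_s (hw : Win n W z₀ s D D') : |s| = 1 := by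
  rcases hw.s_pm with h | h <;> simp [h]

lemma inj (hw : Win n W z₀ s D D') {j k : ℤ} (hjk : |j - k| ≤ (D : ℤ) + D' + 1)
    (h : z₀ + ((j * s : ℤ) : ZMod n) = z₀ + ((k * s : ℤ) : ZMod n)) : j = k := by
  have h2 : ((j * s : ℤ) : ZMod n) = ((k * s : ℤ) : ZMod n) := add_left_cancel h
  have habs : |j * s - k * s| < (n : ℤ) := by
    rw [← sub_mul, abs_mul, hw.abs_s, mul_one]
    exact lt_of_le_of_lt hjk hw.size
  have hjs : j * s = k * s := zmod_int_inj hw.n2 h2 habs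
  have hs0 : s ≠ 0 := by rcases hw.s_pm with h | h <;> simp [h]
  exact mul_right_cancel₀ hs0 hjs

lemma stepr (hw : Win n W z₀ s D D') (j e : ℤ) :
    (z₀ + ((j * s : ℤ) : ZMod n)) + ((e : ℤ) : ZMod n)
      = z₀ + (((j + e * s) * s : ℤ) : ZMod n) := by
  have h1 : ((j + e * s) * s : ℤ) = j * s + e * (s * s) := by ring
  rw [h1, hw.ss, mul_one]
  push_cast
  ring

lemma es_pm (hw : Win n W z₀ s D D') {e : ℤ} (he : e = 1 ∨ e = -1) :
    e * s = 1 ∨ e * s = -1 := by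
  rcases he with h | h <;> rcases hw.s_pm with h' | h' <;> simp [h, h']

lemma cross (hw : Win n W z₀ s D D') {j : ℤ} (hj1 : -(D' : ℤ) ≤ j) (hj2 : j ≤ D)
    {e : ℤ} (he : e = 1 ∨ e = -1)
    (hnot : (z₀ + ((j * s : ℤ) : ZMod n)) + ((e : ℤ) : ZMod n) ∉ W) :
    (e * s = 1 ∧ j = D) ∨ (e * s = -1 ∧ j = -(D' : ℤ)) := by
  rw [hw.stepr j e] at hnot
  rcases hw.es_pm he with h | h
  · exact Or.inl ⟨h, by by_contra hne; exact hnot (hw.mem (j + e * s) (by omega) (by omega))⟩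
  · exact Or.inr ⟨h, by by_contra hne; exact hnot (hw.mem (j + e * s) (by omega) (by omega))⟩

end Win

section WinMain

variable (a : ZMod n) (w : ℕ) {W : Set (ZMod n)}

/-- The interval membership helpers. -/
lemma win_H1 (hW : ∀ z, z ∈ W ↔ ∃ i : ℕ, i < w ∧ z = a + (i : ZMod n)) :
    ∀ k : ℤ, 0 ≤ k → k < w → a + ((k : ℤ) : ZMod n) ∈ W := by
  intro k h0 hk
  refine (hW _).mpr ⟨k.toNat, by omega, ?_⟩
  congr 1
  rw [← Int.cast_natCast, Int.toNat_of_nonneg h0]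

lemma win_H2 (hn2 : 2 ≤ n) (hwn : w < n)
    (hW : ∀ z, z ∈ W ↔ ∃ i : ℕ, i < w ∧ z = a + (i : ZMod n)) :
    ∀ k : ℤ, (w : ℤ) ≤ k → k < n → a + ((k : ℤ) : ZMod n) ∉ W := by
  intro k hk1 hk2 hmem
  obtain ⟨i, hi, hz⟩ := (hW _).mp hmem
  have h2 : ((k : ℤ) : ZMod n) = ((i : ℤ) : ZMod n) := by
    push_cast
    exact add_left_cancel hz
  have : k = i := zmod_int_inj hn2 h2 (by rw [abs_lt]; omega)
  omega

lemma win_H2' (hn2 : 2 ≤ n) (hwn : w < n)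
    (hW : ∀ z, z ∈ W ↔ ∃ i : ℕ, i < w ∧ z = a + (i : ZMod n)) :
    ∀ k : ℤ, -(n : ℤ) + w ≤ k → k < 0 → a + ((k : ℤ) : ZMod n) ∉ W := by
  intro k hk1 hk2
  rw [zmod_shift_n a k]
  exact win_H2 a w hn2 hwn hW (k + n) (by omega) (by omega)

end WinMain

lemma win_main (hn2 : 2 ≤ n) (a : ZMod n) (w : ℕ) (hw1 : 1 ≤ w) (hwn : w < n)
    {s : ℤ} (hs : s = 1 ∨ s = -1) (i₀ : ℕ) (hi₀ : i₀ < w)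
    {W : Set (ZMod n)} (hW : ∀ z, z ∈ W ↔ ∃ i : ℕ, i < w ∧ z = a + (i : ZMod n))
    {D D' : ℕ}
    (hD : D = sInf {m : ℕ | a + (i₀ : ZMod n) + (((((m : ℕ) + 1 : ℕ) : ℤ) * s : ℤ) : ZMod n) ∉ W})
    (hD' : D' = sInf {m : ℕ | a + (i₀ : ZMod n) + (((((m : ℕ) + 1 : ℕ) : ℤ) * -s : ℤ) : ZMod n) ∉ W}) :
    Win n W (a + (i₀ : ZMod n)) s D D' ∧ (D : ℤ) + D' + 1 = w := by
  have hcast : ∀ m : ℤ, (a + (i₀ : ZMod n)) + ((m : ℤ) : ZMod n) = a + ((i₀ + m : ℤ) : ZMod n) := by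
    intro m; push_cast; ring
  have H1 := win_H1 a w hW
  have H2 := win_H2 a w hn2 hwn hW
  have H2' := win_H2' a w hn2 hwn hW
  -- the two infimum computations
  have keyPos : sInf {m : ℕ | a + (i₀ : ZMod n) + (((((m : ℕ) + 1 : ℕ) : ℤ) * 1 : ℤ) : ZMod n) ∉ W}
      = w - 1 - i₀ := by
    have hmem : a + (i₀ : ZMod n) + (((((w - 1 - i₀ : ℕ) + 1 : ℕ) : ℤ) * 1 : ℤ) : ZMod n) ∉ W := by
      have e1 : ((((w - 1 - i₀ : ℕ) + 1 : ℕ) : ℤ) * 1 : ℤ) = ((w : ℤ) - i₀) := by push_cast; omega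
      rw [e1, hcast, show (i₀ : ℤ) + ((w : ℤ) - i₀) = (w : ℤ) by ring]
      exact H2 w le_rfl (by omega)
    refine le_antisymm (Nat.sInf_le hmem) (le_csInf ⟨_, hmem⟩ fun b hb => ?_)
    by_contra hlt
    push_neg at hlt
    apply hb
    show a + (i₀ : ZMod n) + (((((b : ℕ) + 1 : ℕ) : ℤ) * 1 : ℤ) : ZMod n) ∈ W
    rw [show ((((b : ℕ) + 1 : ℕ) : ℤ) * 1 : ℤ) = ((b : ℤ) + 1) by push_cast; ring, hcast]
    exact H1 _ (by omega) (by push_cast; omega)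
  have keyNeg : sInf {m : ℕ | a + (i₀ : ZMod n) + (((((m : ℕ) + 1 : ℕ) : ℤ) * (-1) : ℤ) : ZMod n) ∉ W}
      = i₀ := by
    have hmem : a + (i₀ : ZMod n) + (((((i₀ : ℕ) + 1 : ℕ) : ℤ) * (-1) : ℤ) : ZMod n) ∉ W := by
      rw [show ((((i₀ : ℕ) + 1 : ℕ) : ℤ) * (-1) : ℤ) = (-(i₀ : ℤ) - 1) by push_cast; ring, hcast,
        show (i₀ : ℤ) + (-(i₀ : ℤ) - 1) = (-1 : ℤ) by ring]
      exact H2' (-1) (by omega) (by omega)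
    refine le_antisymm (Nat.sInf_le hmem) (le_csInf ⟨_, hmem⟩ fun b hb => ?_)
    by_contra hlt
    push_neg at hlt
    apply hb
    show a + (i₀ : ZMod n) + (((((b : ℕ) + 1 : ℕ) : ℤ) * (-1) : ℤ) : ZMod n) ∈ W
    rw [show ((((b : ℕ) + 1 : ℕ) : ℤ) * (-1) : ℤ) = ((i₀ : ℤ) - b - 1) - i₀ by push_cast; ring, hcast,
      show (i₀ : ℤ) + (((i₀ : ℤ) - b - 1) - i₀) = (i₀ : ℤ) - b - 1 by ring]
    exact H1 _ (by omega) (by omega)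
  rcases hs with rfl | rfl
  · have hDv : D = w - 1 - i₀ := by rw [hD, keyPos]
    have hD'v : D' = i₀ := by
      rw [hD']
      simpa using keyNeg
    rw [hDv, hD'v]
    refine ⟨⟨Or.inl rfl, by push_cast; omega, ?_, ?_, ?_, ?_⟩, by push_cast; omega⟩
    · intro j hj1 hj2
      rw [show (j * 1 : ℤ) = j by ring, hcast]
      refine H1 _ (by omega) ?_
      push_cast at hj2 ⊢
      omega
    · rw [show ((((w - 1 - i₀ : ℕ) : ℤ) + 1) * 1 : ℤ) = ((w : ℤ) - i₀) by push_cast; omega, hcast,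
        show (i₀ : ℤ) + ((w : ℤ) - i₀) = (w : ℤ) by ring]
      exact H2 w le_rfl (by omega)
    · rw [show ((-((i₀ : ℕ) : ℤ) - 1) * 1 : ℤ) = -(i₀ : ℤ) - 1 by ring, hcast,
        show (i₀ : ℤ) + (-(i₀ : ℤ) - 1) = (-1 : ℤ) by ring]
      exact H2' (-1) (by omega) (by omega)
    · intro z hz
      obtain ⟨i, hi, rfl⟩ := (hW _).mp hz
      refine ⟨(i : ℤ) - i₀, by omega, by push_cast; omega, ?_⟩
      rw [show (((i : ℤ) - i₀) * 1 : ℤ) = (i : ℤ) - i₀ by ring, hcast,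
        show (i₀ : ℤ) + ((i : ℤ) - i₀) = (i : ℤ) by ring]
      push_cast
      ring
  · have hDv : D = i₀ := by
      rw [hD]
      simpa using keyNeg
    have hD'v : D' = w - 1 - i₀ := by
      rw [hD']
      have : ∀ m : ℕ, ((((m : ℕ) + 1 : ℕ) : ℤ) * -(-1) : ℤ) = ((((m : ℕ) + 1 : ℕ) : ℤ) * 1 : ℤ) := by
        intro m; ring
      simpa [this] using keyPos
    rw [hDv, hD'v]
    refine ⟨⟨Or.inr rfl, by push_cast; omega, ?_, ?_, ?_, ?_⟩, by push_cast; omega⟩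
    · intro j hj1 hj2
      rw [show (j * (-1) : ℤ) = -j by ring, hcast]
      refine H1 _ ?_ (by omega)
      push_cast at hj1 ⊢
      omega
    · rw [show ((((i₀ : ℕ) : ℤ) + 1) * (-1) : ℤ) = -(i₀ : ℤ) - 1 by ring, hcast,
        show (i₀ : ℤ) + (-(i₀ : ℤ) - 1) = (-1 : ℤ) by ring]
      exact H2' (-1) (by omega) (by omega)
    · rw [show ((-((w - 1 - i₀ : ℕ) : ℤ) - 1) * (-1) : ℤ) = ((w : ℤ) - i₀) by push_cast; omega, hcast,
        show (i₀ : ℤ) + ((w : ℤ) - i₀) = (w : ℤ) by ring]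
      exact H2 w le_rfl (by omega)
    · intro z hz
      obtain ⟨i, hi, rfl⟩ := (hW _).mp hz
      refine ⟨(i₀ : ℤ) - i, by push_cast; omega, by omega, ?_⟩
      rw [show (((i₀ : ℤ) - i) * (-1) : ℤ) = (i : ℤ) - i₀ by ring, hcast,
        show (i₀ : ℤ) + ((i : ℤ) - i₀) = (i : ℤ) by ring]
      push_cast
      ring

end TrapAux

section TrapCtx

variable {n : ℕ} {δ ε : ZMod n → ℤ}

/-- One more window lemma. -/
lemma Win.mem_iff {W : Set (ZMod n)} {z₀ : ZMod n} {s : ℤ} {D D' : ℕ}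
    (hw : Win n W z₀ s D D') {k : ℤ} (h1 : -(D' : ℤ) - 1 ≤ k) (h2 : k ≤ (D : ℤ) + 1) :
    z₀ + ((k * s : ℤ) : ZMod n) ∈ W ↔ (-(D' : ℤ) ≤ k ∧ k ≤ D) := by
  constructor
  · intro hm
    by_contra hc
    have : k = (D : ℤ) + 1 ∨ k = -(D' : ℤ) - 1 := by omega
    rcases this with rfl | rfl
    · exact hw.top hm
    · exact hw.bot hm
  · exact fun h => hw.mem k h.1 h.2

/-- The context of the trapped-robber argument: the two windows of the conflux
and the constancy of the direction functions on them. -/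
structure Ctx (n : ℕ) (δ ε : ZMod n → ℤ) where
  x₀ : ZMod n
  y₀ : ZMod n
  s₁ : ℤ
  s₂ : ℤ
  d₁ : ℕ
  d₁' : ℕ
  d₂ : ℕ
  d₂' : ℕ
  WX : Set (ZMod n)
  WY : Set (ZMod n)
  winX : Win n WX x₀ s₁ d₁ d₁'
  winY : Win n WY y₀ s₂ d₂ d₂'
  constX : ∀ x ∈ WX, ε x = s₂
  constY : ∀ y ∈ WY, δ y = s₁
  pmδ : ∀ y, PM (δ y)
  pmε : ∀ x, PM (ε x)

namespace Ctx

variable (C : Ctx n δ ε)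

/-- The conflux rectangle. -/
def K : Set (Vtx n) := {p | p.1 ∈ C.WX ∧ p.2 ∈ C.WY}

/-- The point of the rectangle with offsets `(j, k)` from the robber's start. -/
def pt (j k : ℤ) : Vtx n :=
  (C.x₀ + ((j * C.s₁ : ℤ) : ZMod n), C.y₀ + ((k * C.s₂ : ℤ) : ZMod n))

lemma hn2 (C : Ctx n δ ε) : 2 ≤ n := Win.n2 C.winX

lemma pt_fst (j k : ℤ) : (C.pt j k).1 = C.x₀ + ((j * C.s₁ : ℤ) : ZMod n) := rfl
lemma pt_snd (j k : ℤ) : (C.pt j k).2 = C.y₀ + ((k * C.s₂ : ℤ) : ZMod n) := rfl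

lemma pt_mem_K {j k : ℤ} (hj1 : -(C.d₁' : ℤ) ≤ j) (hj2 : j ≤ C.d₁)
    (hk1 : -(C.d₂' : ℤ) ≤ k) (hk2 : k ≤ C.d₂) : C.pt j k ∈ C.K :=
  ⟨C.winX.mem j hj1 hj2, C.winY.mem k hk1 hk2⟩

lemma pt_mem_K_iff {j k : ℤ} (hj1 : -(C.d₁' : ℤ) - 1 ≤ j) (hj2 : j ≤ (C.d₁ : ℤ) + 1)
    (hk1 : -(C.d₂' : ℤ) - 1 ≤ k) (hk2 : k ≤ (C.d₂ : ℤ) + 1) :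
    C.pt j k ∈ C.K ↔ ((-(C.d₁' : ℤ) ≤ j ∧ j ≤ C.d₁) ∧ (-(C.d₂' : ℤ) ≤ k ∧ k ≤ C.d₂)) := by
  unfold K pt
  simp only [Set.mem_setOf_eq]
  rw [C.winX.mem_iff hj1 hj2, C.winY.mem_iff hk1 hk2]

lemma pt_inj {j k j' k' : ℤ} (hj : |j - j'| ≤ (C.d₁ : ℤ) + C.d₁' + 1)
    (hk : |k - k'| ≤ (C.d₂ : ℤ) + C.d₂' + 1) (h : C.pt j k = C.pt j' k') :
    j = j' ∧ k = k' := by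
  have h1 := congrArg Prod.fst h
  have h2 := congrArg Prod.snd h
  exact ⟨C.winX.inj hj h1, C.winY.inj hk h2⟩

/-- `Adj` as out-neighbour description. -/
lemma adj_iff (p q : Vtx n) : Adj δ ε p q ↔ q = vOut δ p ∨ q = hOut ε p := by
  simp only [Adj, vOut, hOut, Prod.ext_iff]
  all_goals tauto

lemma vOut_pt {j k : ℤ} (hk1 : -(C.d₂' : ℤ) ≤ k) (hk2 : k ≤ C.d₂) :
    vOut δ (C.pt j k) = C.pt (j + 1) k := by
  have hδ' : δ (C.y₀ + ((k * C.s₂ : ℤ) : ZMod n)) = C.s₁ := C.constY _ (C.winY.mem k hk1 hk2)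
  unfold vOut pt
  rw [Prod.mk.injEq]
  refine ⟨?_, rfl⟩
  show (C.x₀ + ((j * C.s₁ : ℤ) : ZMod n)) + ((δ (C.y₀ + ((k * C.s₂ : ℤ) : ZMod n)) : ℤ) : ZMod n) = _
  rw [hδ']
  have h := C.winX.stepr j C.s₁
  rw [C.winX.ss] at h
  simpa using h

lemma hOut_pt {j k : ℤ} (hj1 : -(C.d₁' : ℤ) ≤ j) (hj2 : j ≤ C.d₁) :
    hOut ε (C.pt j k) = C.pt j (k + 1) := by
  have hε' : ε (C.x₀ + ((j * C.s₁ : ℤ) : ZMod n)) = C.s₂ := C.constX _ (C.winX.mem j hj1 hj2)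
  unfold hOut pt
  rw [Prod.mk.injEq]
  refine ⟨rfl, ?_⟩
  show (C.y₀ + ((k * C.s₂ : ℤ) : ZMod n)) + ((ε (C.x₀ + ((j * C.s₁ : ℤ) : ZMod n)) : ℤ) : ZMod n) = _
  rw [hε']
  have h := C.winY.stepr k C.s₂
  rw [C.winY.ss] at h
  simpa using h

end Ctx

end TrapCtx


namespace Ctx

variable {n : ℕ} {δ ε : ZMod n → ℤ} (C : Ctx n δ ε)

/-- Named points: terminal corner, its two out-neighbours, and the two guard posts. -/
def F : Vtx n := C.pt (C.d₁ : ℤ) (C.d₂ : ℤ)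
def GA : Vtx n := C.pt ((C.d₁ : ℤ) + 1) (C.d₂ : ℤ)
def Fd : Vtx n := C.pt (C.d₁ : ℤ) ((C.d₂ : ℤ) + 1)
def gVpt : Vtx n := C.pt ((C.d₁ : ℤ) + 1) (-(C.d₂' : ℤ))
def gHpt : Vtx n := C.pt (-(C.d₁' : ℤ)) ((C.d₂ : ℤ) + 1)

lemma vOut_F : vOut δ C.F = C.GA := C.vOut_pt (by omega) (by omega)
lemma hOut_F : hOut ε C.F = C.Fd := C.hOut_pt (by omega) (by omega)

lemma finK (C : Ctx n δ ε) : Finite (Vtx n) := by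
  haveI : NeZero n := ⟨by have := C.hn2; omega⟩
  infer_instance

/-- The terminal corner is the far corner of the rectangle. -/
lemma termCorner_eq {g : Vtx n} (hg : TermCorner δ ε C.K g) : g = C.F := by
  obtain ⟨⟨hgK, -⟩, hnadj⟩ := hg
  obtain ⟨j, hj1, hj2, hx⟩ := C.winX.idx _ hgK.1
  obtain ⟨k, hk1, hk2, hy⟩ := C.winY.idx _ hgK.2
  have hgpt : g = C.pt j k := Prod.ext_iff.mpr ⟨hx, hy⟩
  have hv : vOut δ g ∉ C.K := fun hm => hnadj _ hm ((adj_iff g (vOut δ g)).mpr (Or.inl rfl))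
  have hh : hOut ε g ∉ C.K := fun hm => hnadj _ hm ((adj_iff g (hOut ε g)).mpr (Or.inr rfl))
  rw [hgpt, C.vOut_pt hk1 hk2] at hv
  rw [hgpt, C.hOut_pt hj1 hj2] at hh
  have hjtop : j = (C.d₁ : ℤ) := by
    by_contra hne
    exact hv (C.pt_mem_K (by omega) (by omega) hk1 hk2)
  have hktop : k = (C.d₂ : ℤ) := by
    by_contra hne
    exact hh (C.pt_mem_K hj1 hj2 (by omega) (by omega))
  rw [hgpt, hjtop, hktop]
  rfl

/-- Lower bound on the neighbour count of a non-corner boundary vertex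
(vertical-guard version): `v = pt d₁ k` with `-d₂' < k` and `k + 1 ≤ d₂`. -/
lemma nbr_v_lower {k : ℤ} (hk1 : -(C.d₂' : ℤ) < k) (hk2 : k + 1 ≤ C.d₂) :
    (if C.d₁ + C.d₁' = 0 then 2 else 3) ≤ nbrCount δ ε C.K (C.pt (C.d₁ : ℤ) k) := by
  haveI := C.finK
  set v := C.pt (C.d₁ : ℤ) k with hv
  have hu₁ : C.pt (C.d₁ : ℤ) (k + 1) ∈ {u ∈ C.K | UAdj δ ε v u} := by
    refine ⟨C.pt_mem_K (by omega) (by omega) (by omega) (by omega), Or.inl ?_⟩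
    rw [adj_iff]
    right
    rw [C.hOut_pt (by omega) (by omega)]
  have hu₂ : C.pt (C.d₁ : ℤ) (k - 1) ∈ {u ∈ C.K | UAdj δ ε v u} := by
    refine ⟨C.pt_mem_K (by omega) (by omega) (by omega) (by omega), Or.inr ?_⟩
    rw [adj_iff, C.hOut_pt (by omega) (by omega), show k - 1 + 1 = k by ring]
    right
    rfl
  have h12 : C.pt (C.d₁ : ℤ) (k + 1) ≠ C.pt (C.d₁ : ℤ) (k - 1) := by
    intro h
    have := (C.pt_inj (by simp; omega) (by rw [abs_le]; omega) h).2
    omega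
  by_cases hw : C.d₁ + C.d₁' = 0
  · rw [if_pos hw]
    calc (2 : ℕ) = ({C.pt (C.d₁ : ℤ) (k + 1), C.pt (C.d₁ : ℤ) (k - 1)} : Set (Vtx n)).ncard :=
          (Set.ncard_pair h12).symm
      _ ≤ _ := Set.ncard_le_ncard (by
          intro u hu
          rcases hu with rfl | hu
          · exact hu₁
          · rw [Set.mem_singleton_iff] at hu
            subst hu
            exact hu₂) (Set.toFinite _)
  · rw [if_neg hw]
    have hu₃ : C.pt ((C.d₁ : ℤ) - 1) k ∈ {u ∈ C.K | UAdj δ ε v u} := by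
      refine ⟨C.pt_mem_K (by omega) (by omega) (by omega) (by omega), Or.inr ?_⟩
      rw [adj_iff, C.vOut_pt (by omega) (by omega), show (C.d₁ : ℤ) - 1 + 1 = (C.d₁ : ℤ) by ring]
      left
      rfl
    have h31 : C.pt ((C.d₁ : ℤ) - 1) k ≠ C.pt (C.d₁ : ℤ) (k + 1) := by
      intro h
      have := (C.pt_inj (by rw [abs_le]; omega) (by rw [abs_le]; omega) h).1
      omega
    have h32 : C.pt ((C.d₁ : ℤ) - 1) k ≠ C.pt (C.d₁ : ℤ) (k - 1) := by
      intro h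
      have := (C.pt_inj (by rw [abs_le]; omega) (by rw [abs_le]; omega) h).1
      omega
    calc (3 : ℕ) = ({C.pt ((C.d₁ : ℤ) - 1) k, C.pt (C.d₁ : ℤ) (k + 1), C.pt (C.d₁ : ℤ) (k - 1)} : Set (Vtx n)).ncard := by
          rw [Set.ncard_insert_of_notMem (by simp [h31, h32]) (Set.toFinite _), Set.ncard_pair h12]
      _ ≤ _ := Set.ncard_le_ncard (by
          intro u hu
          rcases hu with rfl | rfl | hu
          · exact hu₃
          · exact hu₁
          · rw [Set.mem_singleton_iff] at hu
            subst hu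
            exact hu₂) (Set.toFinite _)

/-- Upper bound on the neighbour count of the corner `pt d₁ (-d₂')`. -/
lemma nbr_v_corner_upper :
    nbrCount δ ε C.K (C.pt (C.d₁ : ℤ) (-(C.d₂' : ℤ))) ≤ if C.d₁ + C.d₁' = 0 then 1 else 2 := by
  haveI := C.finK
  set c : Vtx n := C.pt (C.d₁ : ℤ) (-(C.d₂' : ℤ)) with hc
  have hsub : {u ∈ C.K | UAdj δ ε c u} ⊆
      {C.pt (C.d₁ : ℤ) (-(C.d₂' : ℤ) + 1), C.pt ((C.d₁ : ℤ) - 1) (-(C.d₂' : ℤ))} := by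
    rintro u ⟨huK, hadj | hadj⟩
    · rw [adj_iff] at hadj
      rcases hadj with rfl | rfl
      · exfalso
        rw [hc, C.vOut_pt (by omega) (by omega)] at huK
        rw [C.pt_mem_K_iff (by omega) (by omega) (by omega) (by omega)] at huK
        omega
      · rw [hc, C.hOut_pt (by omega) (by omega)]
        left
        rfl
    · rw [adj_iff] at hadj
      obtain ⟨jx, hjx1, hjx2, hux⟩ := C.winX.idx _ huK.1
      obtain ⟨kx, hkx1, hkx2, huy⟩ := C.winY.idx _ huK.2
      have hupt : u = C.pt jx kx := Prod.ext_iff.mpr ⟨hux, huy⟩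
      subst hupt
      rcases hadj with hadj | hadj
      · rw [C.vOut_pt hkx1 hkx2] at hadj
        have := C.pt_inj (by rw [abs_le]; omega) (by rw [abs_le]; omega) hadj
        right
        rw [Set.mem_singleton_iff]
        congr 1 <;> omega
      · rw [C.hOut_pt hjx1 hjx2] at hadj
        have := C.pt_inj (by rw [abs_le]; omega) (by rw [abs_le]; omega) hadj
        omega
  by_cases hw : C.d₁ + C.d₁' = 0
  · rw [if_pos hw]
    refine le_trans (Set.ncard_le_ncard ?_ (Set.toFinite _)) (Set.ncard_singleton (C.pt (C.d₁ : ℤ) (-(C.d₂' : ℤ) + 1))).le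
    intro u hu
    have h2 := hsub hu
    rcases h2 with h2 | h2
    · exact h2
    · exfalso
      rw [Set.mem_singleton_iff] at h2
      subst h2
      have := hu.1
      rw [C.pt_mem_K_iff (by omega) (by omega) (by omega) (by omega)] at this
      omega
  · rw [if_neg hw]
    exact le_trans (Set.ncard_le_ncard hsub (Set.toFinite _)) ((Set.ncard_insert_le _ _).trans (by simp))

/-- The vertical guard post. -/
lemma vguard_eq {g : Vtx n} (hg : IsVGuard δ ε C.K g) : g = C.gVpt := by
  obtain ⟨v, hmc, hvout, hside, rfl⟩ := hg
  obtain ⟨⟨hvK, hmin⟩, -⟩ := hmc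
  obtain ⟨j, hj1, hj2, hx⟩ := C.winX.idx _ hvK.1
  obtain ⟨k, hk1, hk2, hy⟩ := C.winY.idx _ hvK.2
  have hvpt : v = C.pt j k := Prod.ext_iff.mpr ⟨hx, hy⟩
  subst hvpt
  rw [C.vOut_pt hk1 hk2] at hvout ⊢
  have hjtop : j = (C.d₁ : ℤ) := by
    by_contra hne
    exact hvout (C.pt_mem_K (by omega) (by omega) hk1 hk2)
  subst hjtop
  have hkbot : k = -(C.d₂' : ℤ) := by
    by_contra hne
    have hklt : -(C.d₂' : ℤ) < k := by omega
    -- first get `k + 1 ≤ d₂` from `hside`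
    have hkk : k + 1 ≤ (C.d₂ : ℤ) := by
      rcases hside with hsingle | hho
      · exfalso
        have h1 : C.pt (C.d₁ : ℤ) (-(C.d₂' : ℤ)) ∈ C.K := C.pt_mem_K (by omega) (by omega) (by omega) (by omega)
        rw [hsingle, Set.mem_singleton_iff] at h1
        have := (C.pt_inj (by simp; omega) (by rw [abs_le]; omega) h1).2
        omega
      · rw [C.hOut_pt (by omega) (by omega)] at hho
        rw [C.pt_mem_K_iff (by omega) (by omega) (by omega) (by omega)] at hho
        omega
    have hlow := C.nbr_v_corner_upper
    have hhigh := C.nbr_v_lower hklt hkk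
    have hcmp := hmin _ (C.pt_mem_K (by omega) (by omega) (by omega) (by omega) :
      C.pt (C.d₁ : ℤ) (-(C.d₂' : ℤ)) ∈ C.K)
    by_cases hw : C.d₁ + C.d₁' = 0
    · rw [if_pos hw] at hlow hhigh
      omega
    · rw [if_neg hw] at hlow hhigh
      omega
  subst hkbot
  rfl

end Ctx


namespace Ctx

variable {n : ℕ} {δ ε : ZMod n → ℤ} (C : Ctx n δ ε)

lemma nbr_h_lower {j : ℤ} (hj1 : -(C.d₁' : ℤ) < j) (hj2 : j + 1 ≤ C.d₁) :
    (if C.d₂ + C.d₂' = 0 then 2 else 3) ≤ nbrCount δ ε C.K (C.pt j (C.d₂ : ℤ)) := by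
  haveI := C.finK
  set v := C.pt j (C.d₂ : ℤ) with hv
  have hu₁ : C.pt (j + 1) (C.d₂ : ℤ) ∈ {u ∈ C.K | UAdj δ ε v u} := by
    refine ⟨C.pt_mem_K (by omega) (by omega) (by omega) (by omega), Or.inl ?_⟩
    rw [adj_iff]
    left
    rw [C.vOut_pt (by omega) (by omega)]
  have hu₂ : C.pt (j - 1) (C.d₂ : ℤ) ∈ {u ∈ C.K | UAdj δ ε v u} := by
    refine ⟨C.pt_mem_K (by omega) (by omega) (by omega) (by omega), Or.inr ?_⟩
    rw [adj_iff, C.vOut_pt (by omega) (by omega), show j - 1 + 1 = j by ring]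
    left
    rfl
  have h12 : C.pt (j + 1) (C.d₂ : ℤ) ≠ C.pt (j - 1) (C.d₂ : ℤ) := by
    intro h
    have := (C.pt_inj (by rw [abs_le]; omega) (by simp; omega) h).1
    omega
  by_cases hw : C.d₂ + C.d₂' = 0
  · rw [if_pos hw]
    calc (2 : ℕ) = ({C.pt (j + 1) (C.d₂ : ℤ), C.pt (j - 1) (C.d₂ : ℤ)} : Set (Vtx n)).ncard :=
          (Set.ncard_pair h12).symm
      _ ≤ _ := Set.ncard_le_ncard (by
          intro u hu
          rcases hu with rfl | hu
          · exact hu₁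
          · rw [Set.mem_singleton_iff] at hu
            subst hu
            exact hu₂) (Set.toFinite _)
  · rw [if_neg hw]
    have hu₃ : C.pt j ((C.d₂ : ℤ) - 1) ∈ {u ∈ C.K | UAdj δ ε v u} := by
      refine ⟨C.pt_mem_K (by omega) (by omega) (by omega) (by omega), Or.inr ?_⟩
      rw [adj_iff, C.hOut_pt (by omega) (by omega), show (C.d₂ : ℤ) - 1 + 1 = (C.d₂ : ℤ) by ring]
      right
      rfl
    have h31 : C.pt j ((C.d₂ : ℤ) - 1) ≠ C.pt (j + 1) (C.d₂ : ℤ) := by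
      intro h
      have := (C.pt_inj (by rw [abs_le]; omega) (by rw [abs_le]; omega) h).2
      omega
    have h32 : C.pt j ((C.d₂ : ℤ) - 1) ≠ C.pt (j - 1) (C.d₂ : ℤ) := by
      intro h
      have := (C.pt_inj (by rw [abs_le]; omega) (by rw [abs_le]; omega) h).2
      omega
    calc (3 : ℕ) = ({C.pt j ((C.d₂ : ℤ) - 1), C.pt (j + 1) (C.d₂ : ℤ), C.pt (j - 1) (C.d₂ : ℤ)} : Set (Vtx n)).ncard := by
          rw [Set.ncard_insert_of_notMem (by simp [h31, h32]) (Set.toFinite _), Set.ncard_pair h12]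
      _ ≤ _ := Set.ncard_le_ncard (by
          intro u hu
          rcases hu with rfl | rfl | hu
          · exact hu₃
          · exact hu₁
          · rw [Set.mem_singleton_iff] at hu
            subst hu
            exact hu₂) (Set.toFinite _)

lemma nbr_h_corner_upper :
    nbrCount δ ε C.K (C.pt (-(C.d₁' : ℤ)) (C.d₂ : ℤ)) ≤ if C.d₂ + C.d₂' = 0 then 1 else 2 := by
  haveI := C.finK
  set c : Vtx n := C.pt (-(C.d₁' : ℤ)) (C.d₂ : ℤ) with hc
  have hsub : {u ∈ C.K | UAdj δ ε c u} ⊆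
      {C.pt (-(C.d₁' : ℤ) + 1) (C.d₂ : ℤ), C.pt (-(C.d₁' : ℤ)) ((C.d₂ : ℤ) - 1)} := by
    rintro u ⟨huK, hadj | hadj⟩
    · rw [adj_iff] at hadj
      rcases hadj with rfl | rfl
      · rw [hc, C.vOut_pt (by omega) (by omega)]
        left
        rfl
      · exfalso
        rw [hc, C.hOut_pt (by omega) (by omega)] at huK
        rw [C.pt_mem_K_iff (by omega) (by omega) (by omega) (by omega)] at huK
        omega
    · rw [adj_iff] at hadj
      obtain ⟨jx, hjx1, hjx2, hux⟩ := C.winX.idx _ huK.1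
      obtain ⟨kx, hkx1, hkx2, huy⟩ := C.winY.idx _ huK.2
      have hupt : u = C.pt jx kx := Prod.ext_iff.mpr ⟨hux, huy⟩
      subst hupt
      rcases hadj with hadj | hadj
      · rw [C.vOut_pt hkx1 hkx2] at hadj
        have := C.pt_inj (by rw [abs_le]; omega) (by rw [abs_le]; omega) hadj
        omega
      · rw [C.hOut_pt hjx1 hjx2] at hadj
        have := C.pt_inj (by rw [abs_le]; omega) (by rw [abs_le]; omega) hadj
        right
        rw [Set.mem_singleton_iff]
        congr 1 <;> omega
  by_cases hw : C.d₂ + C.d₂' = 0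
  · rw [if_pos hw]
    refine le_trans (Set.ncard_le_ncard ?_ (Set.toFinite _)) (Set.ncard_singleton (C.pt (-(C.d₁' : ℤ) + 1) (C.d₂ : ℤ))).le
    intro u hu
    have h2 := hsub hu
    rcases h2 with h2 | h2
    · exact h2
    · exfalso
      rw [Set.mem_singleton_iff] at h2
      subst h2
      have := hu.1
      rw [C.pt_mem_K_iff (by omega) (by omega) (by omega) (by omega)] at this
      omega
  · rw [if_neg hw]
    exact le_trans (Set.ncard_le_ncard hsub (Set.toFinite _)) ((Set.ncard_insert_le _ _).trans (by simp))

/-- The horizontal guard post. -/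
lemma hguard_eq {g : Vtx n} (hg : IsHGuard δ ε C.K g) : g = C.gHpt := by
  obtain ⟨v, hmc, hhout, hside, rfl⟩ := hg
  obtain ⟨⟨hvK, hmin⟩, -⟩ := hmc
  obtain ⟨j, hj1, hj2, hx⟩ := C.winX.idx _ hvK.1
  obtain ⟨k, hk1, hk2, hy⟩ := C.winY.idx _ hvK.2
  have hvpt : v = C.pt j k := Prod.ext_iff.mpr ⟨hx, hy⟩
  subst hvpt
  rw [C.hOut_pt hj1 hj2] at hhout ⊢
  have hktop : k = (C.d₂ : ℤ) := by
    by_contra hne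
    exact hhout (C.pt_mem_K hj1 hj2 (by omega) (by omega))
  subst hktop
  have hjbot : j = -(C.d₁' : ℤ) := by
    by_contra hne
    have hjlt : -(C.d₁' : ℤ) < j := by omega
    have hjj : j + 1 ≤ (C.d₁ : ℤ) := by
      rcases hside with hsingle | hvo
      · exfalso
        have h1 : C.pt (-(C.d₁' : ℤ)) (C.d₂ : ℤ) ∈ C.K := C.pt_mem_K (by omega) (by omega) (by omega) (by omega)
        rw [hsingle, Set.mem_singleton_iff] at h1
        have := (C.pt_inj (by rw [abs_le]; omega) (by simp; omega) h1).1
        omega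
      · rw [C.vOut_pt (by omega) (by omega)] at hvo
        rw [C.pt_mem_K_iff (by omega) (by omega) (by omega) (by omega)] at hvo
        omega
    have hlow := C.nbr_h_corner_upper
    have hhigh := C.nbr_h_lower hjlt hjj
    have hcmp := hmin _ (C.pt_mem_K (by omega) (by omega) (by omega) (by omega) :
      C.pt (-(C.d₁' : ℤ)) (C.d₂ : ℤ) ∈ C.K)
    by_cases hw : C.d₂ + C.d₂' = 0
    · rw [if_pos hw] at hlow hhigh
      omega
    · rw [if_neg hw] at hlow hhigh
      omega
  subst hjbot
  rfl

/-- The out-neighbours of the terminal guard post are exactly those of the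
terminal corner. -/
lemma termguard_outs {g : Vtx n} (hg : IsTermGuard δ ε C.K g) :
    ({vOut δ g, hOut ε g} : Set (Vtx n)) = {C.GA, C.Fd} := by
  obtain ⟨-, c, hc, hset⟩ := hg
  have hceq := C.termCorner_eq hc
  subst hceq
  rw [hset, C.vOut_F, C.hOut_F]


end Ctx


section TrapDyn

variable {n : ℕ}

/-- Number of vertical moves among the first `t` robber moves. -/
def vcnt (rob : ℕ → Vtx n) (t : ℕ) : ℕ :=
  ((Finset.range t).filter (fun k => (rob (k + 1)).2 = (rob k).2)).card

/-- Number of horizontal moves among the first `t` robber moves. -/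
def hcnt (rob : ℕ → Vtx n) (t : ℕ) : ℕ :=
  ((Finset.range t).filter (fun k => ¬((rob (k + 1)).2 = (rob k).2))).card

lemma vcnt_add_hcnt (rob : ℕ → Vtx n) (t : ℕ) : vcnt rob t + hcnt rob t = t := by
  unfold vcnt hcnt
  rw [Finset.card_filter_add_card_filter_not]
  exact Finset.card_range t

lemma vcnt_succ (rob : ℕ → Vtx n) (t : ℕ) :
    vcnt rob (t + 1) = vcnt rob t + (if (rob (t + 1)).2 = (rob t).2 then 1 else 0) := by
  unfold vcnt
  rw [Finset.range_add_one, Finset.filter_insert]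
  split_ifs with h
  · rw [Finset.card_insert_of_notMem (by simp)]
  · rfl

lemma hcnt_succ (rob : ℕ → Vtx n) (t : ℕ) :
    hcnt rob (t + 1) = hcnt rob t + (if (rob (t + 1)).2 = (rob t).2 then 0 else 1) := by
  unfold hcnt
  rw [Finset.range_add_one, Finset.filter_insert]
  split_ifs with h
  · rfl
  · rw [Finset.card_insert_of_notMem (by simp)]

lemma vcnt_mono (rob : ℕ → Vtx n) {t t' : ℕ} (h : t ≤ t') : vcnt rob t ≤ vcnt rob t' :=
  Finset.card_le_card (Finset.filter_subset_filter _ (Finset.range_subset_range.mpr h))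

lemma hcnt_mono (rob : ℕ → Vtx n) {t t' : ℕ} (h : t ≤ t') : hcnt rob t ≤ hcnt rob t' :=
  Finset.card_le_card (Finset.filter_subset_filter _ (Finset.range_subset_range.mpr h))

namespace Ctx

variable {δ ε : ZMod n → ℤ} (C : Ctx n δ ε) (rob : ℕ → Vtx n)

/-- Each forced robber move is along exactly one of the two out-arcs. -/
lemma step_cases (C : Ctx n δ ε) (hAdj : ∀ t, Adj δ ε (rob t) (rob (t + 1))) (t : ℕ) :
    (rob (t + 1) = vOut δ (rob t) ∧ (rob (t + 1)).2 = (rob t).2) ∨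
    (rob (t + 1) = hOut ε (rob t) ∧ ¬((rob (t + 1)).2 = (rob t).2)) := by
  haveI : Fact (1 < n) := ⟨by have := C.hn2; omega⟩
  rcases (adj_iff _ _).mp (hAdj t) with h | h
  · exact Or.inl ⟨h, by rw [h]; rfl⟩
  · refine Or.inr ⟨h, ?_⟩
    rw [h]
    show (rob t).2 + _ ≠ _
    intro hcontra
    have h0 : ((ε (rob t).1 : ℤ) : ZMod n) = 0 := by
      have := hcontra
      rwa [add_eq_left] at this
    rcases C.pmε (rob t).1 with he | he <;> rw [he] at h0 <;> simp at h0

/-- Position of the robber while it stays inside the conflux. -/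
lemma inK_pos (hAdj : ∀ t, Adj δ ε (rob t) (rob (t + 1)))
    (hr0 : rob 0 = (C.x₀, C.y₀)) :
    ∀ t, (∀ k, k ≤ t → rob k ∈ C.K) →
      rob t = C.pt (vcnt rob t) (hcnt rob t) ∧ vcnt rob t ≤ C.d₁ ∧ hcnt rob t ≤ C.d₂ := by
  intro t
  induction t with
  | zero =>
    intro _
    refine ⟨?_, by simp [vcnt], by simp [hcnt]⟩
    rw [hr0]
    unfold pt
    simp [vcnt, hcnt]
  | succ t ih =>
    intro hK
    obtain ⟨hpos, hv, hh⟩ := ih (fun k hk => hK k (by omega))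
    rcases C.step_cases rob hAdj t with ⟨hst, hcol⟩ | ⟨hst, hcol⟩
    · have hv1 : vcnt rob (t + 1) = vcnt rob t + 1 := by rw [vcnt_succ, if_pos hcol]
      have hh1 : hcnt rob (t + 1) = hcnt rob t := by rw [hcnt_succ, if_pos hcol]; ring
      have hpos1 : rob (t + 1) = C.pt ((vcnt rob t : ℤ) + 1) (hcnt rob t) := by
        rw [hst, hpos, C.vOut_pt (by omega) (by omega)]
      have hvle : vcnt rob t + 1 ≤ C.d₁ := by
        by_contra hgt
        have hd : vcnt rob t = C.d₁ := by omega
        have := hK (t + 1) le_rfl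
        rw [hpos1] at this
        rw [C.pt_mem_K_iff (by omega) (by omega) (by omega) (by omega)] at this
        omega
      refine ⟨?_, by omega, by omega⟩
      rw [hpos1, hv1, hh1]
      congr 1 <;> push_cast <;> ring
    · have hv1 : vcnt rob (t + 1) = vcnt rob t := by rw [vcnt_succ, if_neg hcol]; ring
      have hh1 : hcnt rob (t + 1) = hcnt rob t + 1 := by rw [hcnt_succ, if_neg hcol]
      have hpos1 : rob (t + 1) = C.pt (vcnt rob t) ((hcnt rob t : ℤ) + 1) := by
        rw [hst, hpos, C.hOut_pt (by omega) (by omega)]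
      have hhle : hcnt rob t + 1 ≤ C.d₂ := by
        by_contra hgt
        have hd : hcnt rob t = C.d₂ := by omega
        have := hK (t + 1) le_rfl
        rw [hpos1] at this
        rw [C.pt_mem_K_iff (by omega) (by omega) (by omega) (by omega)] at this
        omega
      refine ⟨?_, by omega, by omega⟩
      rw [hpos1, hv1, hh1]
      congr 1 <;> push_cast <;> ring

/-- The robber is forced out of the conflux. -/
lemma exit_exists (hAdj : ∀ t, Adj δ ε (rob t) (rob (t + 1)))
    (hr0 : rob 0 = (C.x₀, C.y₀)) :
    ∃ t, t ≤ C.d₁ + C.d₂ + 1 ∧ rob t ∉ C.K := by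
  by_contra hc
  push_neg at hc
  obtain ⟨-, hv, hh⟩ := C.inK_pos rob hAdj hr0 (C.d₁ + C.d₂ + 1) (fun k hk => hc k (by omega))
  have := vcnt_add_hcnt rob (C.d₁ + C.d₂ + 1)
  omega

/-- Exit-type dichotomy at the first exit time. -/
lemma exit_type (hAdj : ∀ t, Adj δ ε (rob t) (rob (t + 1)))
    (hr0 : rob 0 = (C.x₀, C.y₀))
    (tE : ℕ) (htE1 : rob tE ∉ C.K) (htE2 : ∀ k, k < tE → rob k ∈ C.K) :
    (vcnt rob tE = C.d₁ + 1 ∧ hcnt rob tE ≤ C.d₂ ∧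
        rob tE = C.pt ((C.d₁ : ℤ) + 1) (hcnt rob tE)) ∨
    (hcnt rob tE = C.d₂ + 1 ∧ vcnt rob tE ≤ C.d₁ ∧
        rob tE = C.pt (vcnt rob tE) ((C.d₂ : ℤ) + 1)) := by
  have htE0 : tE ≠ 0 := by
    intro h
    subst h
    exact htE1 (by rw [hr0]; exact ⟨C.winX.mem 0 (by omega) (by omega) |> fun h => by
      simpa using C.winX.mem 0 (by omega) (by omega), by
      simpa using C.winY.mem 0 (by omega) (by omega)⟩)
  obtain ⟨t, rfl⟩ : ∃ t, tE = t + 1 := ⟨tE - 1, by omega⟩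
  obtain ⟨hpos, hv, hh⟩ := C.inK_pos rob hAdj hr0 t (fun k hk => htE2 k (by omega))
  rcases C.step_cases rob hAdj t with ⟨hst, hcol⟩ | ⟨hst, hcol⟩
  · have hv1 : vcnt rob (t + 1) = vcnt rob t + 1 := by rw [vcnt_succ, if_pos hcol]
    have hh1 : hcnt rob (t + 1) = hcnt rob t := by rw [hcnt_succ, if_pos hcol]; ring
    have hpos1 : rob (t + 1) = C.pt ((vcnt rob t : ℤ) + 1) (hcnt rob t) := by
      rw [hst, hpos, C.vOut_pt (by omega) (by omega)]
    have hveq : vcnt rob t = C.d₁ := by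
      by_contra hne
      apply htE1
      rw [hpos1]
      exact C.pt_mem_K (by omega) (by omega) (by omega) (by omega)
    left
    refine ⟨by omega, by omega, ?_⟩
    rw [hpos1, hh1, hveq]
  · have hv1 : vcnt rob (t + 1) = vcnt rob t := by rw [vcnt_succ, if_neg hcol]; ring
    have hh1 : hcnt rob (t + 1) = hcnt rob t + 1 := by rw [hcnt_succ, if_neg hcol]
    have hpos1 : rob (t + 1) = C.pt (vcnt rob t) ((hcnt rob t : ℤ) + 1) := by
      rw [hst, hpos, C.hOut_pt (by omega) (by omega)]
    have hheq : hcnt rob t = C.d₂ := by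
      by_contra hne
      apply htE1
      rw [hpos1]
      exact C.pt_mem_K (by omega) (by omega) (by omega) (by omega)
    right
    refine ⟨by omega, by omega, ?_⟩
    rw [hpos1, hv1, hheq]

end Ctx

end TrapDyn




/-- The cop's mirror counter: clamped catch-up tracking of the count `c`. -/
def mirror (c oc : ℕ → ℕ) (arr : ℕ) (M₀ : ℤ) (t : ℕ) : ℤ :=
  max M₀ ((c t : ℤ) - max 0 ((c arr : ℤ) - M₀ - ((oc t : ℤ) - oc arr)))

lemma mirror_at_arr (c oc : ℕ → ℕ) (arr : ℕ) (M₀ : ℤ) :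
    mirror c oc arr M₀ arr = M₀ := by
  unfold mirror
  omega

lemma mirror_step (c oc : ℕ → ℕ) (arr : ℕ) (M₀ : ℤ) (t : ℕ)
    (hstep : (c (t + 1) = c t + 1 ∧ oc (t + 1) = oc t) ∨
             (c (t + 1) = c t ∧ oc (t + 1) = oc t + 1)) :
    mirror c oc arr M₀ (t + 1) = mirror c oc arr M₀ t ∨
    mirror c oc arr M₀ (t + 1) = mirror c oc arr M₀ t + 1 := by
  unfold mirror
  rcases hstep with ⟨h1, h2⟩ | ⟨h1, h2⟩ <;> rw [h1, h2] <;> push_cast <;> omega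

lemma mirror_ge (c oc : ℕ → ℕ) (arr : ℕ) (M₀ : ℤ) (t : ℕ) :
    M₀ ≤ mirror c oc arr M₀ t := le_max_left _ _

lemma mirror_capture (c oc : ℕ → ℕ) (arr tE t' : ℕ) (M₀ needed : ℕ)
    (h1 : c tE = M₀)
    (hmc : ∀ a b : ℕ, a ≤ b → c a ≤ c b)
    (hmo : ∀ a b : ℕ, a ≤ b → oc a ≤ oc b)
    (hsum : ∀ tt, c tt + oc tt = tt)
    (h5 : tE ≤ t')
    (h6 : arr ≤ tE + needed)
    (h7 : oc tE + needed ≤ oc t') :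
    mirror c oc arr (M₀ : ℤ) t' = c t' := by
  unfold mirror
  rcases le_total arr tE with hle | hle
  · have m1 := hmc arr tE hle
    have m2 := hmo arr t' (hle.trans h5)
    have m3 := hmc tE t' h5
    omega
  · have m1 := hmc tE arr hle
    have m2 := hmo tE arr hle
    have m3 := hmc tE t' h5
    have m4 := hmo tE t' h5
    have s1 := hsum arr
    have s2 := hsum tE
    have hoc : oc arr ≤ oc t' := by
      rcases le_total arr t' with h | h
      · exact hmo arr t' h
      · -- arr > t' : then show directly
        omega
    omega


namespace Ctx

variable {n : ℕ} {δ ε : ZMod n → ℤ}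

/-- Case A: the robber's first exit from the conflux is vertical.  Then with
the two column guards mirroring its vertical progress, the robber is captured
or stays in the columns of `S₁` forever. -/
lemma caseA (C : Ctx n δ ε) (rob : ℕ → Vtx n)
    (hAdj : ∀ t, Adj δ ε (rob t) (rob (t + 1))) (hr0 : rob 0 = (C.x₀, C.y₀))
    (tE : ℕ) (htE1 : rob tE ∉ C.K) (htE2 : ∀ k, k < tE → rob k ∈ C.K)
    (hexA : vcnt rob tE = C.d₁ + 1)
    (copL copR : ℕ → Vtx n)
    (hL : ∀ t, C.d₁ + C.d₂' + 1 ≤ t →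
      copL t = C.pt (mirror (vcnt rob) (hcnt rob) (C.d₁ + C.d₂' + 1) ((C.d₁ + 1 : ℕ) : ℤ) t)
        (-(C.d₂' : ℤ)))
    (hR : ∀ t, C.d₁ + C.d₂ + 1 ≤ t →
      copR t = C.pt (mirror (vcnt rob) (hcnt rob) (C.d₁ + C.d₂ + 1) ((C.d₁ + 1 : ℕ) : ℤ) t)
        (C.d₂ : ℤ)) :
    (∃ t, copL t = rob t ∨ copR t = rob t) ∨ (∀ t, (rob t).2 ∈ C.WY) := by
  have htE0 : 1 ≤ tE := by
    rcases Nat.eq_zero_or_pos tE with h | h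
    · exfalso
      apply htE1
      rw [h, hr0]
      exact ⟨by simpa using C.winX.mem 0 (by omega) (by omega),
             by simpa using C.winY.mem 0 (by omega) (by omega)⟩
    · exact h
  rcases C.exit_type rob hAdj hr0 tE htE1 htE2 with ⟨hv, hhle, hpos⟩ | ⟨hh, hvle, hpos⟩
  swap
  · omega
  set v := hcnt rob tE with hvdef
  have htEval : tE = C.d₁ + 1 + v := by
    have := vcnt_add_hcnt rob tE
    omega
  set colL : ZMod n := C.y₀ + ((-(C.d₂' : ℤ) * C.s₂ : ℤ) : ZMod n) with hcolL
  set colR : ZMod n := C.y₀ + (((C.d₂ : ℤ) * C.s₂ : ℤ) : ZMod n) with hcolR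
  have colId : ∀ k k' : ℤ, -(C.d₂' : ℤ) ≤ k → k ≤ C.d₂ → -(C.d₂' : ℤ) - 1 ≤ k' →
      k' ≤ (C.d₂ : ℤ) + 1 →
      C.y₀ + ((k * C.s₂ : ℤ) : ZMod n) = C.y₀ + ((k' * C.s₂ : ℤ) : ZMod n) → k = k' := by
    intro k k' h1 h2 h3 h4 h
    exact C.winY.inj (by rw [abs_le]; omega) h
  have hposcol : (rob tE).2 = C.y₀ + ((((v : ℕ) : ℤ) * C.s₂ : ℤ) : ZMod n) := by
    rw [hpos]; rfl
  -- The master invariant.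
  have main : ∀ t, (∀ k, tE ≤ k → k < t → ¬((rob k).2 = colL ∨ (rob k).2 = colR)) →
      (∃ k : ℤ, -(C.d₂' : ℤ) ≤ k ∧ k ≤ C.d₂ ∧ (rob t).2 = C.y₀ + ((k * C.s₂ : ℤ) : ZMod n) ∧
        (tE ≤ t → (k - (v : ℤ)).natAbs + hcnt rob tE ≤ hcnt rob t)) ∧
      (rob t).1 = C.x₀ + (((vcnt rob t : ℤ) * C.s₁ : ℤ) : ZMod n) := by
    intro t
    induction t with
    | zero =>
      intro _
      constructor
      · refine ⟨0, by omega, by omega, ?_, by omega⟩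
        rw [hr0]
        show C.y₀ = _
        norm_num
      · rw [hr0]
        show C.x₀ = _
        norm_num [vcnt]
    | succ t ih =>
      intro hNB
      obtain ⟨⟨k, hk1, hk2, hcol, hbd⟩, hrow⟩ := ih (fun k h1 h2 => hNB k h1 (by omega))
      have hcolY : (rob t).2 ∈ C.WY := by rw [hcol]; exact C.winY.mem k hk1 hk2
      rcases C.step_cases rob hAdj t with ⟨hst, hcoleq⟩ | ⟨hst, hcolne⟩
      · -- vertical move
        have hv1 : vcnt rob (t + 1) = vcnt rob t + 1 := by rw [vcnt_succ, if_pos hcoleq]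
        have hh1 : hcnt rob (t + 1) = hcnt rob t := by rw [hcnt_succ, if_pos hcoleq]; ring
        constructor
        · refine ⟨k, hk1, hk2, by rw [hcoleq, hcol], ?_⟩
          intro hle
          rcases Nat.lt_or_ge t tE with hlt | hge
          · -- then t + 1 = tE, and k = v
            have : t + 1 = tE := by omega
            have hkv : k = (v : ℤ) := by
              apply colId k v hk1 hk2 (by omega) (by omega)
              rw [← hcol, ← hcoleq, this, hposcol]
            have h9 : hcnt rob tE = hcnt rob t := by rw [← this, hh1]
            rw [hkv]
            omega
          · have := hbd hge
            omega
        · rw [hst]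
          show (rob t).1 + ((δ (rob t).2 : ℤ) : ZMod n) = _
          rw [C.constY _ hcolY, hrow, C.winX.stepr]
          congr 1
          rw [C.winX.ss, hv1]
          push_cast
          ring
      · -- horizontal move
        have hv1 : vcnt rob (t + 1) = vcnt rob t := by rw [vcnt_succ, if_neg hcolne]; ring
        have hh1 : hcnt rob (t + 1) = hcnt rob t + 1 := by rw [hcnt_succ, if_neg hcolne]
        have hrow1 : (rob (t + 1)).1 = C.x₀ + (((vcnt rob (t + 1) : ℤ) * C.s₁ : ℤ) : ZMod n) := by
          rw [hst]
          show (rob t).1 = _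
          rw [hrow, hv1]
        have epm := C.pmε (rob t).1
        have hcol1 : (rob (t + 1)).2
            = C.y₀ + (((k + (ε (rob t).1) * C.s₂) * C.s₂ : ℤ) : ZMod n) := by
          rw [hst]
          show (rob t).2 + ((ε (rob t).1 : ℤ) : ZMod n) = _
          rw [hcol, C.winY.stepr]
        have hes : (ε (rob t).1) * C.s₂ = 1 ∨ (ε (rob t).1) * C.s₂ = -1 :=
          C.winY.es_pm epm
        refine ⟨?_, hrow1⟩
        rcases Nat.lt_or_ge (t + 1) tE with hlt | hge1
        · -- still strictly inside K afterwards
          have hK1 := htE2 (t + 1) hlt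
          obtain ⟨k'', hk''1, hk''2, hcol''⟩ := C.winY.idx _ hK1.2
          refine ⟨k'', hk''1, hk''2, hcol'', ?_⟩
          intro h
          omega
        · rcases Nat.eq_or_lt_of_le hge1 with heq | hgt
          · -- t + 1 = tE
            refine ⟨v, by omega, by omega, ?_, ?_⟩
            · rw [heq] at hposcol
              exact hposcol
            · intro h
              rw [heq]
              simp
          · -- tE ≤ t, so the no-boundary hypothesis applies at t
            have htge : tE ≤ t := by omega
            have hnb := hNB t htge (by omega)
            push_neg at hnb
            have hkL : k ≠ -(C.d₂' : ℤ) := by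
              intro h
              exact hnb.1 (by rw [hcol, h])
            have hkR : k ≠ (C.d₂ : ℤ) := by
              intro h
              exact hnb.2 (by rw [hcol, h])
            refine ⟨k + (ε (rob t).1) * C.s₂, by omega, by omega, hcol1, ?_⟩
            intro h
            have := hbd htge
            rw [hh1]
            rcases hes with h' | h' <;> rw [h'] <;> omega
  -- Case split on whether the robber ever visits a boundary column after exiting.
  by_cases hB : ∃ t, tE ≤ t ∧ ((rob t).2 = colL ∨ (rob t).2 = colR)
  · -- capture
    left
    haveI : DecidablePred fun t => tE ≤ t ∧ ((rob t).2 = colL ∨ (rob t).2 = colR) :=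
      Classical.decPred _
    set t' := Nat.find hB with ht'def
    obtain ⟨ht'1, ht'2⟩ := Nat.find_spec hB
    have hmin : ∀ k, tE ≤ k → k < t' → ¬((rob k).2 = colL ∨ (rob k).2 = colR) := by
      intro k h1 h2 h3
      exact Nat.find_min hB h2 ⟨h1, h3⟩
    obtain ⟨⟨k, hk1, hk2, hcol, hbd⟩, hrow⟩ := main t' hmin
    have hbd' := hbd ht'1
    have hsum1 := vcnt_add_hcnt rob t'
    have hsum2 := vcnt_add_hcnt rob tE
    have hvm : vcnt rob tE ≤ vcnt rob t' := vcnt_mono rob ht'1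
    have hhm : hcnt rob tE ≤ hcnt rob t' := hcnt_mono rob ht'1
    rcases ht'2 with hcl | hcr
    · -- left boundary: captured by `copL`
      have hkval : k = -(C.d₂' : ℤ) := by
        apply colId k (-(C.d₂' : ℤ)) hk1 hk2 (by omega) (by omega)
        rw [← hcol, hcl]
      have hneed : hcnt rob tE + (v + C.d₂') ≤ hcnt rob t' := by
        have : (k - (v : ℤ)).natAbs = v + C.d₂' := by omega
        omega
      have harr : C.d₁ + C.d₂' + 1 ≤ t' := by omega
      refine ⟨t', Or.inl ?_⟩
      rw [hL t' harr, mirror_capture (vcnt rob) (hcnt rob) _ tE t' (C.d₁ + 1) (v + C.d₂')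
        hexA (fun a b h => vcnt_mono rob h) (fun a b h => hcnt_mono rob h)
        (vcnt_add_hcnt rob) ht'1 (by omega) hneed]
      refine (Prod.ext_iff.mpr ⟨?_, ?_⟩).symm
      · rw [hrow]; rfl
      · rw [hcol, hkval]; rfl
    · -- right boundary: captured by `copR`
      have hkval : k = (C.d₂ : ℤ) := by
        apply colId k (C.d₂ : ℤ) hk1 hk2 (by omega) (by omega)
        rw [← hcol, hcr]
      have hneed : hcnt rob tE + (C.d₂ - v) ≤ hcnt rob t' := by
        have : (k - (v : ℤ)).natAbs = C.d₂ - v := by omega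
        omega
      have harr : C.d₁ + C.d₂ + 1 ≤ t' := by omega
      refine ⟨t', Or.inr ?_⟩
      rw [hR t' harr, mirror_capture (vcnt rob) (hcnt rob) _ tE t' (C.d₁ + 1) (C.d₂ - v)
        hexA (fun a b h => vcnt_mono rob h) (fun a b h => hcnt_mono rob h)
        (vcnt_add_hcnt rob) ht'1 (by omega) hneed]
      refine (Prod.ext_iff.mpr ⟨?_, ?_⟩).symm
      · rw [hrow]; rfl
      · rw [hcol, hkval]; rfl
  · -- confinement to the columns of `S₁`
    right
    intro t
    push_neg at hB
    obtain ⟨⟨k, hk1, hk2, hcol, -⟩, -⟩ := main t (fun k h1 h2 => by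
      have := hB k
      tauto)
    rw [hcol]
    exact C.winY.mem k hk1 hk2

end Ctx


namespace Ctx

variable {n : ℕ} {δ ε : ZMod n → ℤ}

/-- Case B: the robber's first exit from the conflux is horizontal.  Then with
the two row guards mirroring its horizontal progress, the robber is captured
or stays in the rows of `S₂` forever. -/
lemma caseB (C : Ctx n δ ε) (rob : ℕ → Vtx n)
    (hAdj : ∀ t, Adj δ ε (rob t) (rob (t + 1))) (hr0 : rob 0 = (C.x₀, C.y₀))
    (tE : ℕ) (htE1 : rob tE ∉ C.K) (htE2 : ∀ k, k < tE → rob k ∈ C.K)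
    (hexB : hcnt rob tE = C.d₂ + 1)
    (copB copT : ℕ → Vtx n)
    (hBot : ∀ t, C.d₂ + C.d₁' + 1 ≤ t →
      copB t = C.pt (-(C.d₁' : ℤ))
        (mirror (hcnt rob) (vcnt rob) (C.d₂ + C.d₁' + 1) ((C.d₂ + 1 : ℕ) : ℤ) t))
    (hTop : ∀ t, C.d₁ + C.d₂ + 1 ≤ t →
      copT t = C.pt (C.d₁ : ℤ)
        (mirror (hcnt rob) (vcnt rob) (C.d₁ + C.d₂ + 1) ((C.d₂ + 1 : ℕ) : ℤ) t)) :
    (∃ t, copB t = rob t ∨ copT t = rob t) ∨ (∀ t, (rob t).1 ∈ C.WX) := by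
  have htE0 : 1 ≤ tE := by
    rcases Nat.eq_zero_or_pos tE with h | h
    · exfalso
      apply htE1
      rw [h, hr0]
      exact ⟨by simpa using C.winX.mem 0 (by omega) (by omega),
             by simpa using C.winY.mem 0 (by omega) (by omega)⟩
    · exact h
  rcases C.exit_type rob hAdj hr0 tE htE1 htE2 with ⟨hv, hhle, hpos⟩ | ⟨hh, hvle, hpos⟩
  · omega
  set u := vcnt rob tE with hudef
  have htEval : tE = C.d₂ + 1 + u := by
    have := vcnt_add_hcnt rob tE
    omega
  set rowB : ZMod n := C.x₀ + ((-(C.d₁' : ℤ) * C.s₁ : ℤ) : ZMod n) with hrowB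
  set rowT : ZMod n := C.x₀ + (((C.d₁ : ℤ) * C.s₁ : ℤ) : ZMod n) with hrowT
  have rowId : ∀ k k' : ℤ, -(C.d₁' : ℤ) ≤ k → k ≤ C.d₁ → -(C.d₁' : ℤ) - 1 ≤ k' →
      k' ≤ (C.d₁ : ℤ) + 1 →
      C.x₀ + ((k * C.s₁ : ℤ) : ZMod n) = C.x₀ + ((k' * C.s₁ : ℤ) : ZMod n) → k = k' := by
    intro k k' h1 h2 h3 h4 h
    exact C.winX.inj (by rw [abs_le]; omega) h
  have hposrow : (rob tE).1 = C.x₀ + ((((u : ℕ) : ℤ) * C.s₁ : ℤ) : ZMod n) := by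
    rw [hpos]; rfl
  -- The master invariant.
  have main : ∀ t, (∀ k, tE ≤ k → k < t → ¬((rob k).1 = rowB ∨ (rob k).1 = rowT)) →
      (∃ k : ℤ, -(C.d₁' : ℤ) ≤ k ∧ k ≤ C.d₁ ∧ (rob t).1 = C.x₀ + ((k * C.s₁ : ℤ) : ZMod n) ∧
        (tE ≤ t → (k - (u : ℤ)).natAbs + vcnt rob tE ≤ vcnt rob t)) ∧
      (rob t).2 = C.y₀ + (((hcnt rob t : ℤ) * C.s₂ : ℤ) : ZMod n) := by
    intro t
    induction t with
    | zero =>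
      intro _
      constructor
      · refine ⟨0, by omega, by omega, ?_, by omega⟩
        rw [hr0]
        show C.x₀ = _
        norm_num
      · rw [hr0]
        show C.y₀ = _
        norm_num [hcnt]
    | succ t ih =>
      intro hNB
      obtain ⟨⟨k, hk1, hk2, hrw, hbd⟩, hcl⟩ := ih (fun k h1 h2 => hNB k h1 (by omega))
      have hrowX : (rob t).1 ∈ C.WX := by rw [hrw]; exact C.winX.mem k hk1 hk2
      rcases C.step_cases rob hAdj t with ⟨hst, hcoleq⟩ | ⟨hst, hcolne⟩
      · -- vertical move: the tracked (row) coordinate changes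
        have hv1 : vcnt rob (t + 1) = vcnt rob t + 1 := by rw [vcnt_succ, if_pos hcoleq]
        have hh1 : hcnt rob (t + 1) = hcnt rob t := by rw [hcnt_succ, if_pos hcoleq]; ring
        have hcl1 : (rob (t + 1)).2 = C.y₀ + (((hcnt rob (t + 1) : ℤ) * C.s₂ : ℤ) : ZMod n) := by
          rw [hcoleq, hcl, hh1]
        have epm := C.pmδ (rob t).2
        have hrw1 : (rob (t + 1)).1
            = C.x₀ + (((k + (δ (rob t).2) * C.s₁) * C.s₁ : ℤ) : ZMod n) := by
          rw [hst]
          show (rob t).1 + ((δ (rob t).2 : ℤ) : ZMod n) = _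
          rw [hrw, C.winX.stepr]
        have hes : (δ (rob t).2) * C.s₁ = 1 ∨ (δ (rob t).2) * C.s₁ = -1 :=
          C.winX.es_pm epm
        refine ⟨?_, hcl1⟩
        rcases Nat.lt_or_ge (t + 1) tE with hlt | hge1
        · have hK1 := htE2 (t + 1) hlt
          obtain ⟨k'', hk''1, hk''2, hrw''⟩ := C.winX.idx _ hK1.1
          refine ⟨k'', hk''1, hk''2, hrw'', ?_⟩
          intro h
          omega
        · rcases Nat.eq_or_lt_of_le hge1 with heq | hgt
          · refine ⟨u, by omega, by omega, ?_, ?_⟩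
            · rw [heq] at hposrow
              exact hposrow
            · intro h
              rw [heq]
              simp
          · have htge : tE ≤ t := by omega
            have hnb := hNB t htge (by omega)
            push_neg at hnb
            have hkB : k ≠ -(C.d₁' : ℤ) := by
              intro h
              exact hnb.1 (by rw [hrw, h])
            have hkT : k ≠ (C.d₁ : ℤ) := by
              intro h
              exact hnb.2 (by rw [hrw, h])
            refine ⟨k + (δ (rob t).2) * C.s₁, by omega, by omega, hrw1, ?_⟩
            intro h
            have := hbd htge
            rw [hv1]
            rcases hes with h' | h' <;> rw [h'] <;> omega
      · -- horizontal move: the tracked (row) coordinate is unchanged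
        have hv1 : vcnt rob (t + 1) = vcnt rob t := by rw [vcnt_succ, if_neg hcolne]; ring
        have hh1 : hcnt rob (t + 1) = hcnt rob t + 1 := by rw [hcnt_succ, if_neg hcolne]
        have hrw1 : (rob (t + 1)).1 = (rob t).1 := by rw [hst]; rfl
        constructor
        · refine ⟨k, hk1, hk2, by rw [hrw1, hrw], ?_⟩
          intro hle
          rcases Nat.lt_or_ge t tE with hlt | hge
          · have : t + 1 = tE := by omega
            have hku : k = (u : ℤ) := by
              apply rowId k u hk1 hk2 (by omega) (by omega)
              rw [← hrw, ← hrw1, this, hposrow]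
            have h9 : vcnt rob tE = vcnt rob t := by rw [← this, hv1]
            rw [hku]
            omega
          · have := hbd hge
            omega
        · rw [hst]
          show (rob t).2 + ((ε (rob t).1 : ℤ) : ZMod n) = _
          rw [C.constX _ hrowX, hcl, C.winY.stepr]
          congr 1
          rw [C.winY.ss, hh1]
          push_cast
          ring
  by_cases hB : ∃ t, tE ≤ t ∧ ((rob t).1 = rowB ∨ (rob t).1 = rowT)
  · left
    haveI : DecidablePred fun t => tE ≤ t ∧ ((rob t).1 = rowB ∨ (rob t).1 = rowT) :=
      Classical.decPred _
    set t' := Nat.find hB with ht'def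
    obtain ⟨ht'1, ht'2⟩ := Nat.find_spec hB
    have hmin : ∀ k, tE ≤ k → k < t' → ¬((rob k).1 = rowB ∨ (rob k).1 = rowT) := by
      intro k h1 h2 h3
      exact Nat.find_min hB h2 ⟨h1, h3⟩
    obtain ⟨⟨k, hk1, hk2, hrw, hbd⟩, hcl⟩ := main t' hmin
    have hbd' := hbd ht'1
    have hsum1 := vcnt_add_hcnt rob t'
    have hsum2 := vcnt_add_hcnt rob tE
    have hvm : vcnt rob tE ≤ vcnt rob t' := vcnt_mono rob ht'1
    have hhm : hcnt rob tE ≤ hcnt rob t' := hcnt_mono rob ht'1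
    rcases ht'2 with hcb | hct
    · -- bottom row: captured by `copB`
      have hkval : k = -(C.d₁' : ℤ) := by
        apply rowId k (-(C.d₁' : ℤ)) hk1 hk2 (by omega) (by omega)
        rw [← hrw, hcb]
      have hneed : vcnt rob tE + (u + C.d₁') ≤ vcnt rob t' := by
        have : (k - (u : ℤ)).natAbs = u + C.d₁' := by omega
        omega
      have harr : C.d₂ + C.d₁' + 1 ≤ t' := by omega
      refine ⟨t', Or.inl ?_⟩
      rw [hBot t' harr, mirror_capture (hcnt rob) (vcnt rob) _ tE t' (C.d₂ + 1) (u + C.d₁')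
        hexB (fun a b h => hcnt_mono rob h) (fun a b h => vcnt_mono rob h)
        (fun tt => by have := vcnt_add_hcnt rob tt; omega) ht'1 (by omega) hneed]
      refine (Prod.ext_iff.mpr ⟨?_, ?_⟩).symm
      · rw [hrw, hkval]; rfl
      · rw [hcl]; rfl
    · -- top row: captured by `copT`
      have hkval : k = (C.d₁ : ℤ) := by
        apply rowId k (C.d₁ : ℤ) hk1 hk2 (by omega) (by omega)
        rw [← hrw, hct]
      have hneed : vcnt rob tE + (C.d₁ - u) ≤ vcnt rob t' := by
        have : (k - (u : ℤ)).natAbs = C.d₁ - u := by omega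
        omega
      have harr : C.d₁ + C.d₂ + 1 ≤ t' := by omega
      refine ⟨t', Or.inr ?_⟩
      rw [hTop t' harr, mirror_capture (hcnt rob) (vcnt rob) _ tE t' (C.d₂ + 1) (C.d₁ - u)
        hexB (fun a b h => hcnt_mono rob h) (fun a b h => vcnt_mono rob h)
        (fun tt => by have := vcnt_add_hcnt rob tt; omega) ht'1 (by omega) hneed]
      refine (Prod.ext_iff.mpr ⟨?_, ?_⟩).symm
      · rw [hrw, hkval]; rfl
      · rw [hcl]; rfl
  · right
    intro t
    push_neg at hB
    obtain ⟨⟨k, hk1, hk2, hrw, -⟩, -⟩ := main t (fun k h1 h2 => by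
      have := hB k
      tauto)
    rw [hrw]
    exact C.winX.mem k hk1 hk2

end Ctx


namespace Ctx

variable {n : ℕ} {δ ε : ZMod n → ℤ}

/-- Robber-move effect on the counters. -/
lemma cnt_step (C : Ctx n δ ε) (rob : ℕ → Vtx n)
    (hAdj : ∀ t, Adj δ ε (rob t) (rob (t + 1))) (t : ℕ) :
    (vcnt rob (t + 1) = vcnt rob t + 1 ∧ hcnt rob (t + 1) = hcnt rob t) ∨
    (vcnt rob (t + 1) = vcnt rob t ∧ hcnt rob (t + 1) = hcnt rob t + 1) := by
  rcases C.step_cases rob hAdj t with ⟨-, hcol⟩ | ⟨-, hcol⟩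
  · left
    constructor
    · rw [vcnt_succ, if_pos hcol]
    · rw [hcnt_succ, if_pos hcol]; ring
  · right
    constructor
    · rw [vcnt_succ, if_neg hcol]; ring
    · rw [hcnt_succ, if_neg hcol]

/-- The first exit time of the robber from the conflux. -/
noncomputable def tExit (C : Ctx n δ ε) (rob : ℕ → Vtx n) : ℕ := sInf {k | rob k ∉ C.K}

/-- Cop `C_V`: travel to the vertical guard post, then mirror in the left column. -/
noncomputable def copVfun (C : Ctx n δ ε) (f rob : ℕ → Vtx n) (t : ℕ) : Vtx n :=
  if t < C.d₁ + C.d₂' + 1 then f t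
  else C.pt (mirror (vcnt rob) (hcnt rob) (C.d₁ + C.d₂' + 1) ((C.d₁ + 1 : ℕ) : ℤ) t)
    (-(C.d₂' : ℤ))

/-- Cop `C_H`: travel to the horizontal guard post, then mirror in the bottom row. -/
noncomputable def copHfun (C : Ctx n δ ε) (f rob : ℕ → Vtx n) (t : ℕ) : Vtx n :=
  if t < C.d₂ + C.d₁' + 1 then f t
  else C.pt (-(C.d₁' : ℤ))
    (mirror (hcnt rob) (vcnt rob) (C.d₂ + C.d₁' + 1) ((C.d₂ + 1 : ℕ) : ℤ) t)

/-- Cop `C_T`: travel to the terminal corner (or terminal guard post), then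
mirror in the right column or the top row according to the exit type. -/
noncomputable def copTfun (C : Ctx n δ ε) (f rob : ℕ → Vtx n) (t : ℕ) : Vtx n :=
  if t < C.d₁ + C.d₂ + 1 then f t
  else if vcnt rob (tExit C rob) = C.d₁ + 1 then
    C.pt (mirror (vcnt rob) (hcnt rob) (C.d₁ + C.d₂ + 1) ((C.d₁ + 1 : ℕ) : ℤ) t) (C.d₂ : ℤ)
  else C.pt (C.d₁ : ℤ)
    (mirror (hcnt rob) (vcnt rob) (C.d₁ + C.d₂ + 1) ((C.d₂ + 1 : ℕ) : ℤ) t)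

lemma copVfun_step (C : Ctx n δ ε) (f rob : ℕ → Vtx n)
    (hAdj : ∀ t, Adj δ ε (rob t) (rob (t + 1)))
    (hf : ∀ t, t < C.d₁ + C.d₂' + 1 → Step (Adj δ ε) (f t) (f (t + 1)))
    (hfA : f (C.d₁ + C.d₂' + 1) = C.gVpt) (t : ℕ) :
    Step (Adj δ ε) (copVfun C f rob t) (copVfun C f rob (t + 1)) := by
  have hptA : C.pt (((C.d₁ + 1 : ℕ) : ℤ)) (-(C.d₂' : ℤ)) = C.gVpt := by
    unfold gVpt
    congr 1 <;> push_cast <;> ring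
  rcases Nat.lt_or_ge (t + 1) (C.d₁ + C.d₂' + 1) with h1 | h1
  · have e1 : copVfun C f rob t = f t := by rw [copVfun, if_pos (by omega)]
    have e2 : copVfun C f rob (t + 1) = f (t + 1) := by rw [copVfun, if_pos h1]
    rw [e1, e2]
    exact hf t (by omega)
  · rcases Nat.lt_or_ge t (C.d₁ + C.d₂' + 1) with h2 | h2
    · have he : t + 1 = C.d₁ + C.d₂' + 1 := by omega
      have e1 : copVfun C f rob t = f t := by rw [copVfun, if_pos h2]
      have e2 : copVfun C f rob (t + 1) = f (t + 1) := by
        rw [copVfun, if_neg (by omega), he, mirror_at_arr, hptA, ← hfA]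
      rw [e1, e2]
      exact hf t (by omega)
    · have e1 : copVfun C f rob t
          = C.pt (mirror (vcnt rob) (hcnt rob) (C.d₁ + C.d₂' + 1) ((C.d₁ + 1 : ℕ) : ℤ) t)
            (-(C.d₂' : ℤ)) := by rw [copVfun, if_neg (by omega)]
      have e2 : copVfun C f rob (t + 1)
          = C.pt (mirror (vcnt rob) (hcnt rob) (C.d₁ + C.d₂' + 1) ((C.d₁ + 1 : ℕ) : ℤ) (t + 1))
            (-(C.d₂' : ℤ)) := by rw [copVfun, if_neg (by omega)]
      rw [e1, e2]
      rcases mirror_step (vcnt rob) (hcnt rob) (C.d₁ + C.d₂' + 1) ((C.d₁ + 1 : ℕ) : ℤ) t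
          (C.cnt_step rob hAdj t) with h | h
      · rw [h]
        exact Or.inl rfl
      · rw [h]
        refine Or.inr ?_
        rw [← C.vOut_pt (j := mirror (vcnt rob) (hcnt rob) (C.d₁ + C.d₂' + 1) ((C.d₁ + 1 : ℕ) : ℤ) t)
          (k := -(C.d₂' : ℤ)) (by omega) (by omega)]
        exact (adj_iff _ _).mpr (Or.inl rfl)

lemma copHfun_step (C : Ctx n δ ε) (f rob : ℕ → Vtx n)
    (hAdj : ∀ t, Adj δ ε (rob t) (rob (t + 1)))
    (hf : ∀ t, t < C.d₂ + C.d₁' + 1 → Step (Adj δ ε) (f t) (f (t + 1)))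
    (hfA : f (C.d₂ + C.d₁' + 1) = C.gHpt) (t : ℕ) :
    Step (Adj δ ε) (copHfun C f rob t) (copHfun C f rob (t + 1)) := by
  have hptA : C.pt (-(C.d₁' : ℤ)) (((C.d₂ + 1 : ℕ) : ℤ)) = C.gHpt := by
    unfold gHpt
    congr 1 <;> push_cast <;> ring
  have hstep : (hcnt rob (t + 1) = hcnt rob t + 1 ∧ vcnt rob (t + 1) = vcnt rob t) ∨
      (hcnt rob (t + 1) = hcnt rob t ∧ vcnt rob (t + 1) = vcnt rob t + 1) := by
    rcases C.cnt_step rob hAdj t with ⟨a, b⟩ | ⟨a, b⟩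
    · exact Or.inr ⟨b, a⟩
    · exact Or.inl ⟨b, a⟩
  rcases Nat.lt_or_ge (t + 1) (C.d₂ + C.d₁' + 1) with h1 | h1
  · have e1 : copHfun C f rob t = f t := by rw [copHfun, if_pos (by omega)]
    have e2 : copHfun C f rob (t + 1) = f (t + 1) := by rw [copHfun, if_pos h1]
    rw [e1, e2]
    exact hf t (by omega)
  · rcases Nat.lt_or_ge t (C.d₂ + C.d₁' + 1) with h2 | h2
    · have he : t + 1 = C.d₂ + C.d₁' + 1 := by omega
      have e1 : copHfun C f rob t = f t := by rw [copHfun, if_pos h2]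
      have e2 : copHfun C f rob (t + 1) = f (t + 1) := by
        rw [copHfun, if_neg (by omega), he, mirror_at_arr, hptA, ← hfA]
      rw [e1, e2]
      exact hf t (by omega)
    · have e1 : copHfun C f rob t
          = C.pt (-(C.d₁' : ℤ))
            (mirror (hcnt rob) (vcnt rob) (C.d₂ + C.d₁' + 1) ((C.d₂ + 1 : ℕ) : ℤ) t) := by
        rw [copHfun, if_neg (by omega)]
      have e2 : copHfun C f rob (t + 1)
          = C.pt (-(C.d₁' : ℤ))
            (mirror (hcnt rob) (vcnt rob) (C.d₂ + C.d₁' + 1) ((C.d₂ + 1 : ℕ) : ℤ) (t + 1)) := by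
        rw [copHfun, if_neg (by omega)]
      rw [e1, e2]
      rcases mirror_step (hcnt rob) (vcnt rob) (C.d₂ + C.d₁' + 1) ((C.d₂ + 1 : ℕ) : ℤ) t
          hstep with h | h
      · rw [h]
        exact Or.inl rfl
      · rw [h]
        refine Or.inr ?_
        rw [← C.hOut_pt (j := -(C.d₁' : ℤ))
          (k := mirror (hcnt rob) (vcnt rob) (C.d₂ + C.d₁' + 1) ((C.d₂ + 1 : ℕ) : ℤ) t)
          (by omega) (by omega)]
        exact (adj_iff _ _).mpr (Or.inr rfl)

lemma copTfun_step (C : Ctx n δ ε) (f rob : ℕ → Vtx n)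
    (hAdj : ∀ t, Adj δ ε (rob t) (rob (t + 1)))
    (hf : ∀ t, t < C.d₁ + C.d₂ → Step (Adj δ ε) (f t) (f (t + 1)))
    (gT : Vtx n) (hfA : f (C.d₁ + C.d₂) = gT)
    (hadjT : Adj δ ε gT C.GA ∧ Adj δ ε gT C.Fd) (t : ℕ) :
    Step (Adj δ ε) (copTfun C f rob t) (copTfun C f rob (t + 1)) := by
  have hptGA : C.pt (((C.d₁ + 1 : ℕ) : ℤ)) ((C.d₂ : ℤ)) = C.GA := by
    unfold GA
    congr 1 <;> push_cast <;> ring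
  have hptFd : C.pt ((C.d₁ : ℤ)) (((C.d₂ + 1 : ℕ) : ℤ)) = C.Fd := by
    unfold Fd
    congr 1 <;> push_cast <;> ring
  have hstep : (hcnt rob (t + 1) = hcnt rob t + 1 ∧ vcnt rob (t + 1) = vcnt rob t) ∨
      (hcnt rob (t + 1) = hcnt rob t ∧ vcnt rob (t + 1) = vcnt rob t + 1) := by
    rcases C.cnt_step rob hAdj t with ⟨a, b⟩ | ⟨a, b⟩
    · exact Or.inr ⟨b, a⟩
    · exact Or.inl ⟨b, a⟩
  rcases Nat.lt_or_ge (t + 1) (C.d₁ + C.d₂ + 1) with h1 | h1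
  · have e1 : copTfun C f rob t = f t := by rw [copTfun, if_pos (by omega)]
    have e2 : copTfun C f rob (t + 1) = f (t + 1) := by rw [copTfun, if_pos h1]
    rw [e1, e2]
    exact hf t (by omega)
  · by_cases hca : vcnt rob (tExit C rob) = C.d₁ + 1
    · rcases Nat.lt_or_ge t (C.d₁ + C.d₂ + 1) with h2 | h2
      · have he : t + 1 = C.d₁ + C.d₂ + 1 := by omega
        have e1 : copTfun C f rob t = gT := by
          rw [copTfun, if_pos h2, show t = C.d₁ + C.d₂ by omega, hfA]
        have e2 : copTfun C f rob (t + 1) = C.GA := by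
          rw [copTfun, if_neg (by omega), if_pos hca, he, mirror_at_arr, hptGA]
        rw [e1, e2]
        exact Or.inr hadjT.1
      · have e1 : copTfun C f rob t
            = C.pt (mirror (vcnt rob) (hcnt rob) (C.d₁ + C.d₂ + 1) ((C.d₁ + 1 : ℕ) : ℤ) t)
              ((C.d₂ : ℤ)) := by rw [copTfun, if_neg (by omega), if_pos hca]
        have e2 : copTfun C f rob (t + 1)
            = C.pt (mirror (vcnt rob) (hcnt rob) (C.d₁ + C.d₂ + 1) ((C.d₁ + 1 : ℕ) : ℤ) (t + 1))
              ((C.d₂ : ℤ)) := by rw [copTfun, if_neg (by omega), if_pos hca]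
        rw [e1, e2]
        rcases mirror_step (vcnt rob) (hcnt rob) (C.d₁ + C.d₂ + 1) ((C.d₁ + 1 : ℕ) : ℤ) t
            (C.cnt_step rob hAdj t) with h | h
        · rw [h]
          exact Or.inl rfl
        · rw [h]
          refine Or.inr ?_
          rw [← C.vOut_pt
            (j := mirror (vcnt rob) (hcnt rob) (C.d₁ + C.d₂ + 1) ((C.d₁ + 1 : ℕ) : ℤ) t)
            (k := (C.d₂ : ℤ)) (by omega) (by omega)]
          exact (adj_iff _ _).mpr (Or.inl rfl)
    · rcases Nat.lt_or_ge t (C.d₁ + C.d₂ + 1) with h2 | h2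
      · have he : t + 1 = C.d₁ + C.d₂ + 1 := by omega
        have e1 : copTfun C f rob t = gT := by
          rw [copTfun, if_pos h2, show t = C.d₁ + C.d₂ by omega, hfA]
        have e2 : copTfun C f rob (t + 1) = C.Fd := by
          rw [copTfun, if_neg (by omega), if_neg hca, he, mirror_at_arr, hptFd]
        rw [e1, e2]
        exact Or.inr hadjT.2
      · have e1 : copTfun C f rob t
            = C.pt ((C.d₁ : ℤ))
              (mirror (hcnt rob) (vcnt rob) (C.d₁ + C.d₂ + 1) ((C.d₂ + 1 : ℕ) : ℤ) t) := by
          rw [copTfun, if_neg (by omega), if_neg hca]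
        have e2 : copTfun C f rob (t + 1)
            = C.pt ((C.d₁ : ℤ))
              (mirror (hcnt rob) (vcnt rob) (C.d₁ + C.d₂ + 1) ((C.d₂ + 1 : ℕ) : ℤ) (t + 1)) := by
          rw [copTfun, if_neg (by omega), if_neg hca]
        rw [e1, e2]
        rcases mirror_step (hcnt rob) (vcnt rob) (C.d₁ + C.d₂ + 1) ((C.d₂ + 1 : ℕ) : ℤ) t
            hstep with h | h
        · rw [h]
          exact Or.inl rfl
        · rw [h]
          refine Or.inr ?_
          rw [← C.hOut_pt (j := (C.d₁ : ℤ))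
            (k := mirror (hcnt rob) (vcnt rob) (C.d₁ + C.d₂ + 1) ((C.d₂ + 1 : ℕ) : ℤ) t)
            (by omega) (by omega)]
          exact (adj_iff _ _).mpr (Or.inr rfl)

end Ctx


section TrapCongr

variable {n : ℕ}

lemma vcnt_congr {g rob : ℕ → Vtx n} {t s : ℕ} (hs : s ≤ t)
    (h : ∀ k, k ≤ t → g k = rob k) : vcnt g s = vcnt rob s := by
  unfold vcnt
  congr 1
  apply Finset.filter_congr
  intro k hk
  rw [Finset.mem_range] at hk
  rw [h (k + 1) (by omega), h k (by omega)]

lemma hcnt_congr {g rob : ℕ → Vtx n} {t s : ℕ} (hs : s ≤ t)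
    (h : ∀ k, k ≤ t → g k = rob k) : hcnt g s = hcnt rob s := by
  unfold hcnt
  congr 1
  apply Finset.filter_congr
  intro k hk
  rw [Finset.mem_range] at hk
  rw [h (k + 1) (by omega), h k (by omega)]

namespace Ctx

variable {δ ε : ZMod n → ℤ}

lemma tExit_le (C : Ctx n δ ε) (rob : ℕ → Vtx n) {k0 : ℕ} (hk0 : rob k0 ∉ C.K) :
    tExit C rob ≤ k0 := Nat.sInf_le hk0

lemma tExit_spec (C : Ctx n δ ε) (rob : ℕ → Vtx n) (hex : ∃ k, rob k ∉ C.K) :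
    rob (tExit C rob) ∉ C.K ∧ ∀ k, k < tExit C rob → rob k ∈ C.K := by
  constructor
  · exact Nat.sInf_mem hex
  · intro k hk
    by_contra hc
    exact absurd hk (not_lt.mpr (Nat.sInf_le hc))

lemma tExit_congr (C : Ctx n δ ε) {g rob : ℕ → Vtx n} {t : ℕ}
    (h : ∀ k, k ≤ t → g k = rob k) {k0 : ℕ} (hk0le : k0 ≤ t) (hk0 : rob k0 ∉ C.K) :
    tExit C g = tExit C rob := by
  have hgk0 : g k0 ∉ C.K := by rw [h k0 hk0le]; exact hk0
  have hner : {k | rob k ∉ C.K}.Nonempty := ⟨k0, hk0⟩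
  have hneg : {k | g k ∉ C.K}.Nonempty := ⟨k0, hgk0⟩
  have h1 : tExit C rob ≤ k0 := Nat.sInf_le hk0
  have h2 : tExit C g ≤ k0 := Nat.sInf_le hgk0
  apply le_antisymm
  · apply Nat.sInf_le
    show g (tExit C rob) ∉ C.K
    rw [h _ (by omega)]
    exact Nat.sInf_mem hner
  · apply Nat.sInf_le
    show rob (tExit C g) ∉ C.K
    rw [← h _ (by omega)]
    exact Nat.sInf_mem hneg

lemma copVfun_congr (C : Ctx n δ ε) (f : ℕ → Vtx n) {g rob : ℕ → Vtx n} (t : ℕ)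
    (h : ∀ k, k ≤ t → g k = rob k) : copVfun C f g t = copVfun C f rob t := by
  unfold copVfun
  split_ifs with h1
  · rfl
  · have harr : C.d₁ + C.d₂' + 1 ≤ t := by omega
    congr 1
    unfold mirror
    rw [vcnt_congr le_rfl h, vcnt_congr harr h, hcnt_congr le_rfl h, hcnt_congr harr h]

lemma copHfun_congr (C : Ctx n δ ε) (f : ℕ → Vtx n) {g rob : ℕ → Vtx n} (t : ℕ)
    (h : ∀ k, k ≤ t → g k = rob k) : copHfun C f g t = copHfun C f rob t := by
  unfold copHfun
  split_ifs with h1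
  · rfl
  · have harr : C.d₂ + C.d₁' + 1 ≤ t := by omega
    congr 1
    unfold mirror
    rw [vcnt_congr le_rfl h, vcnt_congr harr h, hcnt_congr le_rfl h, hcnt_congr harr h]

lemma copTfun_congr (C : Ctx n δ ε) (f : ℕ → Vtx n) {g rob : ℕ → Vtx n} (t : ℕ)
    (h : ∀ k, k ≤ t → g k = rob k)
    {k0 : ℕ} (hk0le : k0 ≤ C.d₁ + C.d₂ + 1) (hk0 : rob k0 ∉ C.K) :
    copTfun C f g t = copTfun C f rob t := by
  unfold copTfun
  by_cases h1 : t < C.d₁ + C.d₂ + 1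
  · rw [if_pos h1, if_pos h1]
  · have harr : C.d₁ + C.d₂ + 1 ≤ t := by omega
    have hth : tExit C g = tExit C rob := C.tExit_congr h (by omega) hk0
    have htle : tExit C rob ≤ t := le_trans (C.tExit_le rob hk0) (by omega)
    have hvt : vcnt g (tExit C g) = vcnt rob (tExit C rob) := by
      rw [hth]
      exact vcnt_congr (by omega) h
    rw [if_neg h1, if_neg h1, hvt]
    by_cases h2 : vcnt rob (tExit C rob) = C.d₁ + 1
    · rw [if_pos h2, if_pos h2]
      congr 1
      unfold mirror
      rw [vcnt_congr le_rfl h, vcnt_congr harr h, hcnt_congr le_rfl h, hcnt_congr harr h]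
    · rw [if_neg h2, if_neg h2]
      congr 1
      unfold mirror
      rw [vcnt_congr le_rfl h, vcnt_congr harr h, hcnt_congr le_rfl h, hcnt_congr harr h]

end Ctx

lemma getD_map_range {α : Type*} (rob : ℕ → α) (m k : ℕ) (h : k < m) (d : α) :
    ((List.range m).map rob).getD k d = rob k := by
  rw [List.getD_eq_getElem?_getD]
  simp [List.getElem?_map, List.getElem?_range h]

end TrapCongr


/-- (Lemma `trap3`.)  In the forced-move game, let `S₁` be
a vertical stream, `S₂` a horizontal stream and `K` their conflux, with the
robber in `K`.  With `d₁, d₂` (resp. `d₁', d₂'`) the distances from the robber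
to the boundary of `K` in the direction of `S₁, S₂` (resp. the opposite
directions), suppose cop `C_V = c 0` can reach the vertical guard post of `K`
in at most `d₁ + d₂' + 1` moves, cop `C_H = c 1` can reach the horizontal
guard post in at most `d₂ + d₁' + 1` moves, and cop `C_T = c 2` can reach the
terminal corner or (if `K` is maximal) the terminal guard post in at most
`d₁ + d₂` moves.  Then committing these cops the robber is captured or
confined to `S₁` or to `S₂`. -/
theorem conflux_trap
    (n : ℕ) (hn : 1 ≤ n) (δ ε : ZMod n → ℤ)
    (hδ : ∀ y, PM (δ y)) (hε : ∀ x, PM (ε x))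
    (S₁ S₂ : Strm n δ ε) (h₁ : S₁.vert = true) (h₂ : S₂.vert = false)
    (K : Set (Vtx n)) (hK : K = S₁.verts ∩ S₂.verts) (hKne : K.Nonempty)
    (r₀ : Vtx n) (hr : r₀ ∈ K)
    (c : Fin 3 → Vtx n)
    (hV : ∃ g, IsVGuard δ ε K g ∧
      ReachIn (Adj δ ε)
        (exitDist K r₀ (S₁.dir, 0) + exitDist K r₀ (0, -S₂.dir) + 1) (c 0) g)
    (hH : ∃ g, IsHGuard δ ε K g ∧
      ReachIn (Adj δ ε)
        (exitDist K r₀ (0, S₂.dir) + exitDist K r₀ (-S₁.dir, 0) + 1) (c 1) g)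
    (hT : ∃ g, (TermCorner δ ε K g ∨
                 (S₁.IsMax ∧ S₂.IsMax ∧ IsTermGuard δ ε K g)) ∧
      ReachIn (Adj δ ε)
        (exitDist K r₀ (S₁.dir, 0) + exitDist K r₀ (0, S₂.dir)) (c 2) g) :
    EnsureFrom (Adj δ ε) (Adj δ ε) c r₀
      (fun cops rob => Captured cops rob ∨
        (∃ T, ∀ t, T ≤ t → rob t ∈ S₁.verts) ∨
        (∃ T, ∀ t, T ≤ t → rob t ∈ S₂.verts)) := by
  classical
  -- Characterize stream vertex sets
  have h1v : ∀ p : Vtx n, p ∈ S₁.verts ↔ ∃ i : ℕ, i < S₁.w ∧ p.2 = S₁.a + (i : ZMod n) := by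
    intro p
    unfold Strm.verts Strm.proj
    rw [h₁]
    simp
  have h2v : ∀ p : Vtx n, p ∈ S₂.verts ↔ ∃ i : ℕ, i < S₂.w ∧ p.1 = S₂.a + (i : ZMod n) := by
    intro p
    unfold Strm.verts Strm.proj
    rw [h₂]
    simp
  -- Degenerate cases: a full-width stream confines the robber trivially
  by_cases hw1 : S₁.w = n
  · refine ⟨fun _ i => c i, ?_⟩
    intro rob hrob0 hrobA
    constructor
    · intro t i
      left
      cases t <;> rfl
    · right
      left
      haveI : NeZero n := ⟨by omega⟩
      refine ⟨0, fun t _ => (h1v _).mpr ⟨((rob t).2 - S₁.a).val, ?_, ?_⟩⟩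
      · rw [hw1]
        exact ZMod.val_lt _
      · rw [ZMod.natCast_val, ZMod.cast_id]
        ring
  by_cases hw2 : S₂.w = n
  · refine ⟨fun _ i => c i, ?_⟩
    intro rob hrob0 hrobA
    constructor
    · intro t i
      left
      cases t <;> rfl
    · right
      right
      haveI : NeZero n := ⟨by omega⟩
      refine ⟨0, fun t _ => (h2v _).mpr ⟨((rob t).1 - S₂.a).val, ?_, ?_⟩⟩
      · rw [hw2]
        exact ZMod.val_lt _
      · rw [ZMod.natCast_val, ZMod.cast_id]
        ring
  -- Main case
  have hw1' : S₁.w < n := lt_of_le_of_ne S₁.le_n hw1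
  have hw2' : S₂.w < n := lt_of_le_of_ne S₂.le_n hw2
  have hn2 : 2 ≤ n := by have := S₁.one_le; omega
  have hrK := hr
  rw [hK] at hrK
  obtain ⟨hr1, hr2⟩ := hrK
  obtain ⟨i₁, hi₁, hy⟩ := (h1v r₀).mp hr1
  obtain ⟨i₂, hi₂, hx⟩ := (h2v r₀).mp hr2
  have hs₁ : S₁.dir = δ S₁.a := by simp [Strm.dir, h₁]
  have hs₂ : S₂.dir = ε S₂.a := by simp [Strm.dir, h₂]
  have hpm₁ : S₁.dir = 1 ∨ S₁.dir = -1 := by rw [hs₁]; exact hδ S₁.a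
  have hpm₂ : S₂.dir = 1 ∨ S₂.dir = -1 := by rw [hs₂]; exact hε S₂.a
  set WY : Set (ZMod n) := {z | ∃ i : ℕ, i < S₁.w ∧ z = S₁.a + (i : ZMod n)} with hWYdef
  set WX : Set (ZMod n) := {z | ∃ i : ℕ, i < S₂.w ∧ z = S₂.a + (i : ZMod n)} with hWXdef
  have hKiff : ∀ p : Vtx n, p ∈ K ↔ p.1 ∈ WX ∧ p.2 ∈ WY := by
    intro p
    rw [hK]
    exact ⟨fun hp => ⟨(h2v p).mp hp.2, (h1v p).mp hp.1⟩,
           fun hp => ⟨(h1v p).mpr hp.2, (h2v p).mpr hp.1⟩⟩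
  have hy₀Y : r₀.2 ∈ WY := ⟨i₁, hi₁, hy⟩
  have hx₀X : r₀.1 ∈ WX := ⟨i₂, hi₂, hx⟩
  -- exitDist as window infima
  have hd1 : exitDist K r₀ (S₁.dir, 0)
      = sInf {m : ℕ | r₀.1 + ((((m + 1 : ℕ) : ℤ) * S₁.dir : ℤ) : ZMod n) ∉ WX} := by
    unfold exitDist
    congr 1
    ext m
    simp only [Set.mem_setOf_eq, hKiff]
    have e0 : r₀.2 + ((((m + 1 : ℕ) : ℤ) * ((S₁.dir, (0 : ℤ)).2) : ℤ) : ZMod n) = r₀.2 := by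
      norm_num
    rw [e0]
    simp [hy₀Y]
  have hd1' : exitDist K r₀ (-S₁.dir, 0)
      = sInf {m : ℕ | r₀.1 + ((((m + 1 : ℕ) : ℤ) * -S₁.dir : ℤ) : ZMod n) ∉ WX} := by
    unfold exitDist
    congr 1
    ext m
    simp only [Set.mem_setOf_eq, hKiff]
    have e0 : r₀.2 + ((((m + 1 : ℕ) : ℤ) * ((-S₁.dir, (0 : ℤ)).2) : ℤ) : ZMod n) = r₀.2 := by
      norm_num
    rw [e0]
    simp [hy₀Y]
  have hd2 : exitDist K r₀ (0, S₂.dir)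
      = sInf {m : ℕ | r₀.2 + ((((m + 1 : ℕ) : ℤ) * S₂.dir : ℤ) : ZMod n) ∉ WY} := by
    unfold exitDist
    congr 1
    ext m
    simp only [Set.mem_setOf_eq, hKiff]
    have e0 : r₀.1 + ((((m + 1 : ℕ) : ℤ) * (((0 : ℤ), S₂.dir).1) : ℤ) : ZMod n) = r₀.1 := by
      norm_num
    rw [e0]
    simp [hx₀X]
  have hd2' : exitDist K r₀ (0, -S₂.dir)
      = sInf {m : ℕ | r₀.2 + ((((m + 1 : ℕ) : ℤ) * -S₂.dir : ℤ) : ZMod n) ∉ WY} := by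
    unfold exitDist
    congr 1
    ext m
    simp only [Set.mem_setOf_eq, hKiff]
    have e0 : r₀.1 + ((((m + 1 : ℕ) : ℤ) * (((0 : ℤ), -S₂.dir).1) : ℤ) : ZMod n) = r₀.1 := by
      norm_num
    rw [e0]
    simp [hx₀X]
  rw [hx] at hd1 hd1'
  rw [hy] at hd2 hd2'
  obtain ⟨winX, hszX⟩ := win_main hn2 S₂.a S₂.w S₂.one_le hw2' hpm₁ i₂ hi₂
    (fun z => Iff.rfl) hd1 hd1'
  obtain ⟨winY, hszY⟩ := win_main hn2 S₁.a S₁.w S₁.one_le hw1' hpm₂ i₁ hi₁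
    (fun z => Iff.rfl) hd2 hd2'
  rw [← hx] at winX
  rw [← hy] at winY
  have hconstX : ∀ x ∈ WX, ε x = S₂.dir := by
    rintro x ⟨i, hi, rfl⟩
    have := S₂.const i hi
    simp only [h₂, if_false, Bool.false_eq_true] at this
    rw [hs₂]
    exact this
  have hconstY : ∀ y ∈ WY, δ y = S₁.dir := by
    rintro y ⟨i, hi, rfl⟩
    have := S₁.const i hi
    simp only [h₁, if_true] at this
    rw [hs₁]
    exact this
  set C : Ctx n δ ε := ⟨r₀.1, r₀.2, S₁.dir, S₂.dir,
    exitDist K r₀ (S₁.dir, 0), exitDist K r₀ (-S₁.dir, 0),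
    exitDist K r₀ (0, S₂.dir), exitDist K r₀ (0, -S₂.dir),
    WX, WY, winX, winY, hconstX, hconstY, hδ, hε⟩ with hCdef
  have hKC : K = C.K := by
    ext p
    rw [hKiff]
    rfl
  -- guard posts and paths
  obtain ⟨gv, hgv, hrv⟩ := hV
  rw [hKC] at hgv
  have hgveq : gv = C.gVpt := C.vguard_eq hgv
  obtain ⟨fV, hfV0, hfVA, hfVstep⟩ := hrv
  rw [hgveq] at hfVA
  obtain ⟨gh, hgh, hrh⟩ := hH
  rw [hKC] at hgh
  have hgheq : gh = C.gHpt := C.hguard_eq hgh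
  obtain ⟨fH, hfH0, hfHA, hfHstep⟩ := hrh
  rw [hgheq] at hfHA
  obtain ⟨gt, hgt, hrt⟩ := hT
  obtain ⟨fT, hfT0, hfTA, hfTstep⟩ := hrt
  have hadjT : Adj δ ε gt C.GA ∧ Adj δ ε gt C.Fd := by
    rcases hgt with htc | ⟨-, -, htg⟩
    · rw [hKC] at htc
      have hgteq := C.termCorner_eq htc
      constructor
      · rw [hgteq, ← C.vOut_F]
        exact (Ctx.adj_iff _ _).mpr (Or.inl rfl)
      · rw [hgteq, ← C.hOut_F]
        exact (Ctx.adj_iff _ _).mpr (Or.inr rfl)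
    · rw [hKC] at htg
      have houts := C.termguard_outs htg
      constructor
      · have hmem : C.GA ∈ ({vOut δ gt, hOut ε gt} : Set (Vtx n)) := by
          rw [houts]
          left
          rfl
        rcases hmem with h | h
        · exact (Ctx.adj_iff _ _).mpr (Or.inl h)
        · exact (Ctx.adj_iff _ _).mpr (Or.inr (Set.mem_singleton_iff.mp h))
      · have hmem : C.Fd ∈ ({vOut δ gt, hOut ε gt} : Set (Vtx n)) := by
          rw [houts]
          right
          rfl
        rcases hmem with h | h
        · exact (Ctx.adj_iff _ _).mpr (Or.inl h)
        · exact (Ctx.adj_iff _ _).mpr (Or.inr (Set.mem_singleton_iff.mp h))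
  -- the strategy
  refine ⟨fun l => ![Ctx.copVfun C fV (fun k => l.getD k r₀) (l.length - 1),
                     Ctx.copHfun C fH (fun k => l.getD k r₀) (l.length - 1),
                     Ctx.copTfun C fT (fun k => l.getD k r₀) (l.length - 1)], ?_⟩
  intro rob hrob0 hrobA
  have hr0' : rob 0 = (C.x₀, C.y₀) := by
    rw [hrob0]
  obtain ⟨kex, hkexle, hkexK⟩ := C.exit_exists rob hrobA hr0'
  have hagree : ∀ t k, k ≤ t + 1 → ((List.range (t + 2)).map rob).getD k r₀ = rob k :=
    fun t k hk => getD_map_range rob (t + 2) k (by omega) r₀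
  have hlen : ∀ t : ℕ, ((List.range (t + 2)).map rob).length - 1 = t + 1 := by
    intro t
    simp
  have keyV : ∀ t, copsFrom
      (fun l => ![Ctx.copVfun C fV (fun k => l.getD k r₀) (l.length - 1),
                  Ctx.copHfun C fH (fun k => l.getD k r₀) (l.length - 1),
                  Ctx.copTfun C fT (fun k => l.getD k r₀) (l.length - 1)]) c rob t 0
      = Ctx.copVfun C fV rob t := by
    intro t
    cases t with
    | zero =>
      show c 0 = _
      rw [Ctx.copVfun, if_pos (by omega)]
      exact hfV0.symm
    | succ t =>
      show Ctx.copVfun C fV (fun k => ((List.range (t + 2)).map rob).getD k r₀)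
          (((List.range (t + 2)).map rob).length - 1) = _
      rw [hlen t]
      exact C.copVfun_congr fV (t + 1) (hagree t)
  have keyH : ∀ t, copsFrom
      (fun l => ![Ctx.copVfun C fV (fun k => l.getD k r₀) (l.length - 1),
                  Ctx.copHfun C fH (fun k => l.getD k r₀) (l.length - 1),
                  Ctx.copTfun C fT (fun k => l.getD k r₀) (l.length - 1)]) c rob t 1
      = Ctx.copHfun C fH rob t := by
    intro t
    cases t with
    | zero =>
      show c 1 = _
      rw [Ctx.copHfun, if_pos (by omega)]
      exact hfH0.symm
    | succ t =>
      show Ctx.copHfun C fH (fun k => ((List.range (t + 2)).map rob).getD k r₀)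
          (((List.range (t + 2)).map rob).length - 1) = _
      rw [hlen t]
      exact C.copHfun_congr fH (t + 1) (hagree t)
  have keyT : ∀ t, copsFrom
      (fun l => ![Ctx.copVfun C fV (fun k => l.getD k r₀) (l.length - 1),
                  Ctx.copHfun C fH (fun k => l.getD k r₀) (l.length - 1),
                  Ctx.copTfun C fT (fun k => l.getD k r₀) (l.length - 1)]) c rob t 2
      = Ctx.copTfun C fT rob t := by
    intro t
    cases t with
    | zero =>
      show c 2 = _
      rw [Ctx.copTfun, if_pos (by omega)]
      exact hfT0.symm
    | succ t =>
      show Ctx.copTfun C fT (fun k => ((List.range (t + 2)).map rob).getD k r₀)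
          (((List.range (t + 2)).map rob).length - 1) = _
      rw [hlen t]
      exact C.copTfun_congr fT (t + 1) (hagree t) hkexle hkexK
  have hstepV : ∀ t, Step (Adj δ ε) (copsFrom
      (fun l => ![Ctx.copVfun C fV (fun k => l.getD k r₀) (l.length - 1),
                  Ctx.copHfun C fH (fun k => l.getD k r₀) (l.length - 1),
                  Ctx.copTfun C fT (fun k => l.getD k r₀) (l.length - 1)]) c rob t 0) (copsFrom
      (fun l => ![Ctx.copVfun C fV (fun k => l.getD k r₀) (l.length - 1),
                  Ctx.copHfun C fH (fun k => l.getD k r₀) (l.length - 1),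
                  Ctx.copTfun C fT (fun k => l.getD k r₀) (l.length - 1)]) c rob (t + 1) 0) := by
    intro t
    rw [keyV t, keyV (t + 1)]
    exact C.copVfun_step fV rob hrobA hfVstep hfVA t
  have hstepH : ∀ t, Step (Adj δ ε) (copsFrom
      (fun l => ![Ctx.copVfun C fV (fun k => l.getD k r₀) (l.length - 1),
                  Ctx.copHfun C fH (fun k => l.getD k r₀) (l.length - 1),
                  Ctx.copTfun C fT (fun k => l.getD k r₀) (l.length - 1)]) c rob t 1) (copsFrom
      (fun l => ![Ctx.copVfun C fV (fun k => l.getD k r₀) (l.length - 1),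
                  Ctx.copHfun C fH (fun k => l.getD k r₀) (l.length - 1),
                  Ctx.copTfun C fT (fun k => l.getD k r₀) (l.length - 1)]) c rob (t + 1) 1) := by
    intro t
    rw [keyH t, keyH (t + 1)]
    exact C.copHfun_step fH rob hrobA hfHstep hfHA t
  have hstepT : ∀ t, Step (Adj δ ε) (copsFrom
      (fun l => ![Ctx.copVfun C fV (fun k => l.getD k r₀) (l.length - 1),
                  Ctx.copHfun C fH (fun k => l.getD k r₀) (l.length - 1),
                  Ctx.copTfun C fT (fun k => l.getD k r₀) (l.length - 1)]) c rob t 2) (copsFrom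
      (fun l => ![Ctx.copVfun C fV (fun k => l.getD k r₀) (l.length - 1),
                  Ctx.copHfun C fH (fun k => l.getD k r₀) (l.length - 1),
                  Ctx.copTfun C fT (fun k => l.getD k r₀) (l.length - 1)]) c rob (t + 1) 2) := by
    intro t
    rw [keyT t, keyT (t + 1)]
    exact C.copTfun_step fT rob hrobA hfTstep gt hfTA hadjT t
  constructor
  · -- legality of the cops' moves
    intro t i
    fin_cases i
    · exact hstepV t
    · exact hstepH t
    · exact hstepT t
  · -- capture or confinement
    obtain ⟨htE1, htE2⟩ := C.tExit_spec rob ⟨kex, hkexK⟩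
    have htEle : Ctx.tExit C rob ≤ C.d₁ + C.d₂ + 1 := le_trans (C.tExit_le rob hkexK) hkexle
    rcases C.exit_type rob hrobA hr0' (Ctx.tExit C rob) htE1 htE2 with ⟨hvA, -, -⟩ | ⟨hhB, hvle, -⟩
    · -- Case A
      have hL : ∀ t, C.d₁ + C.d₂' + 1 ≤ t → Ctx.copVfun C fV rob t
          = C.pt (mirror (vcnt rob) (hcnt rob) (C.d₁ + C.d₂' + 1) ((C.d₁ + 1 : ℕ) : ℤ) t)
            (-(C.d₂' : ℤ)) := by
        intro t ht
        rw [Ctx.copVfun, if_neg (by omega)]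
      have hR : ∀ t, C.d₁ + C.d₂ + 1 ≤ t → Ctx.copTfun C fT rob t
          = C.pt (mirror (vcnt rob) (hcnt rob) (C.d₁ + C.d₂ + 1) ((C.d₁ + 1 : ℕ) : ℤ) t)
            (C.d₂ : ℤ) := by
        intro t ht
        rw [Ctx.copTfun, if_neg (by omega), if_pos hvA]
      rcases C.caseA rob hrobA hr0' (Ctx.tExit C rob) htE1 htE2 hvA
          (Ctx.copVfun C fV rob) (Ctx.copTfun C fT rob) hL hR with ⟨t, hcap | hcap⟩ | hconf
      · left
        exact ⟨t, 0, Or.inl (by rw [keyV t]; exact hcap)⟩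
      · left
        exact ⟨t, 2, Or.inl (by rw [keyT t]; exact hcap)⟩
      · right
        left
        exact ⟨0, fun t _ => (h1v _).mpr (hconf t)⟩
    · -- Case B
      have hvne : ¬(vcnt rob (Ctx.tExit C rob) = C.d₁ + 1) := by omega
      have hBot : ∀ t, C.d₂ + C.d₁' + 1 ≤ t → Ctx.copHfun C fH rob t
          = C.pt (-(C.d₁' : ℤ))
            (mirror (hcnt rob) (vcnt rob) (C.d₂ + C.d₁' + 1) ((C.d₂ + 1 : ℕ) : ℤ) t) := by
        intro t ht
        rw [Ctx.copHfun, if_neg (by omega)]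
      have hTop : ∀ t, C.d₁ + C.d₂ + 1 ≤ t → Ctx.copTfun C fT rob t
          = C.pt (C.d₁ : ℤ)
            (mirror (hcnt rob) (vcnt rob) (C.d₁ + C.d₂ + 1) ((C.d₂ + 1 : ℕ) : ℤ) t) := by
        intro t ht
        rw [Ctx.copTfun, if_neg (by omega), if_neg hvne]
      rcases C.caseB rob hrobA hr0' (Ctx.tExit C rob) htE1 htE2 hhB
          (Ctx.copHfun C fH rob) (Ctx.copTfun C fT rob) hBot hTop with ⟨t, hcap | hcap⟩ | hconf
      · left
        exact ⟨t, 1, Or.inl (by rw [keyH t]; exact hcap)⟩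
      · left
        exact ⟨t, 2, Or.inl (by rw [keyT t]; exact hcap)⟩
      · right
        right
        exact ⟨0, fun t _ => (h2v _).mpr (hconf t)⟩


end CopsPaper
end
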